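/- arXiv:2509.04231 — 7 statements merged into one kernel-verified Lean document; each statement's English description precedes it below -/
import Mathlib

section
/- One-sample pairwise exchangeability of SENS samples (Theorem 1). Under the one-sample model X_{ij} = μ_i + ε_{ij} (i ∈ [m], j ∈ [n_i], n_i ≥ 4) with null set H₀ = {i : μ_i = 0}, suppose that for every i ∈ H₀ the conditional distribution of the error vector (ε_{i1},…,ε_{i n_i}) given the observations of all other units (X_k)_{k≠i} is almost surely an n_i-fold product of a single probability measure on ℝ that admits a density symmetric about zero. For each i partition [n_i] into disjoint sets N_{i1}, N_{i2} of sizes n_{i1} = ⌈n_i/2⌉ and n_{i2} = n_i − n_{i1}; let X̄_{ik} and S²_{ik} be the sample mean and sample variance of {X_{ij} : j ∈ N_{ik}} (k = 1,2); set V_i = X̄_{i1} + X̄_{i2}, V_i⁰ = X̄_{i1} − X̄_{i2}, S_i = √( (n_i/(n_{i1} n_{i2})) · ((n_{i1}−1)S²_{i1} + (n_{i2}−1)S²_{i2})/(n_i−2) ), and T_i = h_i(V_i/S_i), T_i⁰ = h_i(V_i⁰/S_i), where h_i : ℝ → ℝ is an arbitrary fixed Borel measurable function (in the paper h_i = Φ⁻¹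 ∘ G_{t,n_i−2}). Then for every i ∈ H₀ the random vectors T = (T_1,…,T_m) and T⁰ = (T_1⁰,…,T_m⁰) are pairwise exchangeable at index i, i.e., the joint law of (T, T⁰) on ℝ^m × ℝ^m is invariant under the map that swaps the i-th coordinates T_i and T_i⁰. -/
open MeasureTheory ProbabilityTheory
open scoped Classical

/-- Sample mean of the values `x j`, `j ∈ s`. -/
noncomputable def sampleMean {ι : Type*} (s : Finset ι) (x : ι → ℝ) : ℝ :=
  (∑ j ∈ s, x j) / s.card

/-- Sample variance of the values `x j`, `j ∈ s`. -/
noncomputable def sampleVar {ι : Type*} (s : Finset ι) (x : ι → ℝ) : ℝ :=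
  (∑ j ∈ s, (x j - sampleMean s x) ^ 2) / (s.card - 1)

/-- Swap the coordinates indexed by `J` between the two vectors of a pair. -/
def swapSet {m : ℕ} (J : Finset (Fin m)) (p : (Fin m → ℝ) × (Fin m → ℝ)) :
    (Fin m → ℝ) × (Fin m → ℝ) :=
  (fun j => if j ∈ J then p.2 j else p.1 j, fun j => if j ∈ J then p.1 j else p.2 j)

/-! The flip `flipOn N₂` of the signs of the second half-sample leaves the pooled scale `S`
unchanged and exchanges `V = X̄₁ + X̄₂` with `V⁰ = X̄₁ - X̄₂`, so it swaps `T i` and `T⁰ i`.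
Under the null, the errors of unit `i` are conditionally i.i.d. symmetric given the other
units, so this flip does not change the joint law of the data, and hence neither the law
of `(T, T⁰)`. -/

section Flip

variable {ι : Type*}

noncomputable def flipOn (J : Finset ι) (x : ι → ℝ) : ι → ℝ := fun j => if j ∈ J then -x j else x j

lemma measurable_flipOn (J : Finset ι) : Measurable (flipOn J) :=
  measurable_pi_lambda _ fun j => by
    by_cases hj : j ∈ J <;> simp only [flipOn, hj, if_true, if_false]
    exacts [(measurable_pi_apply j).neg, measurable_pi_apply j]

lemma sampleMean_congr {s : Finset ι} {x y : ι → ℝ} (h : ∀ j ∈ s, x j = y j) :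
    sampleMean s x = sampleMean s y := by
  rw [sampleMean, sampleMean, Finset.sum_congr rfl h]

lemma sampleVar_congr {s : Finset ι} {x y : ι → ℝ} (h : ∀ j ∈ s, x j = y j) :
    sampleVar s x = sampleVar s y := by
  rw [sampleVar, sampleVar, sampleMean_congr h, Finset.sum_congr rfl fun j hj => by rw [h j hj]]

lemma sampleMean_neg (s : Finset ι) (x : ι → ℝ) : sampleMean s (-x) = -sampleMean s x := by
  simp only [sampleMean, Pi.neg_apply, Finset.sum_neg_distrib, neg_div]

lemma sampleVar_neg (s : Finset ι) (x : ι → ℝ) : sampleVar s (-x) = sampleVar s x := by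
  simp only [sampleVar, sampleMean_neg, Pi.neg_apply]
  congr 1
  exact Finset.sum_congr rfl fun j _ => by ring

lemma sampleMean_flipOn_self (J : Finset ι) (x : ι → ℝ) :
    sampleMean J (flipOn J x) = -sampleMean J x := by
  rw [← sampleMean_neg]
  exact sampleMean_congr fun j hj => by simp [flipOn, hj]

lemma sampleVar_flipOn_self (J : Finset ι) (x : ι → ℝ) :
    sampleVar J (flipOn J x) = sampleVar J x := by
  rw [← sampleVar_neg]
  exact sampleVar_congr fun j hj => by simp [flipOn, hj]

lemma sampleMean_flipOn_of_disjoint {s J : Finset ι} (hsJ : Disjoint s J) (x : ι → ℝ) :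
    sampleMean s (flipOn J x) = sampleMean s x :=
  sampleMean_congr fun j hj => by simp [flipOn, Finset.disjoint_left.mp hsJ hj]

lemma sampleVar_flipOn_of_disjoint {s J : Finset ι} (hsJ : Disjoint s J) (x : ι → ℝ) :
    sampleVar s (flipOn J x) = sampleVar s x :=
  sampleVar_congr fun j hj => by simp [flipOn, Finset.disjoint_left.mp hsJ hj]

lemma measurable_sampleMean [Fintype ι] (s : Finset ι) : Measurable (sampleMean s) :=
  (Finset.measurable_sum s fun j _ => measurable_pi_apply j).div_const _

lemma measurable_sampleVar [Fintype ι] (s : Finset ι) : Measurable (sampleVar s) :=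
  (Finset.measurable_sum s fun j _ =>
    ((measurable_pi_apply j).sub (measurable_sampleMean s)).pow_const 2).div_const _

lemma measurePreserving_flipOn_pi [Fintype ι] (J : Finset ι) (ν : Measure ℝ) [SigmaFinite ν]
    [ν.IsNegInvariant] :
    MeasurePreserving (flipOn J) (Measure.pi fun _ : ι => ν) (Measure.pi fun _ : ι => ν) :=
  measurePreserving_pi _ _ (f := fun j x => if j ∈ J then -x else x) fun j => by
    by_cases hj : j ∈ J <;> simp only [hj, if_true, if_false]
    exacts [Measure.measurePreserving_neg ν, MeasurePreserving.id ν]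

end Flip

lemma isNegInvariant_withDensity {G : Type*} [MeasurableSpace G] [InvolutiveNeg G]
    [MeasurableNeg G] {μ : Measure G} [μ.IsNegInvariant] {f : G → ENNReal}
    (hf : Measurable f) (hf_even : Function.Even f) : (μ.withDensity f).IsNegInvariant := by
  refine ⟨Measure.ext fun s hs => ?_⟩
  rw [Measure.neg_def, Measure.map_apply measurable_neg hs, withDensity_apply _ (measurable_neg hs),
    withDensity_apply _ hs]
  calc ∫⁻ x in Neg.neg ⁻¹' s, f x ∂μ = ∫⁻ x in Neg.neg ⁻¹' s, f (-x) ∂μ :=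
        setLIntegral_congr_fun (measurable_neg hs) fun x _ => (hf_even x).symm
    _ = ∫⁻ x in s, f x ∂μ := (Measure.measurePreserving_neg μ).setLIntegral_comp_preimage hs hf

lemma measurePreserving_prodMap_id_of_ae_map_kernel {Ω α β : Type*} [MeasurableSpace Ω]
    [MeasurableSpace α] [MeasurableSpace β] {P : Measure Ω} [IsFiniteMeasure P]
    {Y : Ω → α} {E : Ω → β} (hY : Measurable Y) (hE : Measurable E) {κ : Kernel α β}
    (hjoint : ∀ (A : Set α) (B : Set β), MeasurableSet A → MeasurableSet B →
      P {ω | Y ω ∈ A ∧ E ω ∈ B} = ∫⁻ a in A, κ a B ∂(P.map Y))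
    {R : β → β} (hR : Measurable R) (hκR : ∀ᵐ a ∂(P.map Y), (κ a).map R = κ a) :
    MeasurePreserving (Prod.map id R) (P.map fun ω => (Y ω, E ω))
      (P.map fun ω => (Y ω, E ω)) := by
  have hYE : Measurable fun ω => (Y ω, E ω) := hY.prodMk hE
  have hidR : Measurable (Prod.map id R) := (measurable_id (α := α)).prodMap hR
  refine ⟨hidR, Measure.ext_prod fun {A B} hA hB => ?_⟩
  rw [Measure.map_apply hidR (hA.prod hB), Measure.map_apply hYE (hidR (hA.prod hB)),
    Measure.map_apply hYE (hA.prod hB)]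
  change P {ω | Y ω ∈ A ∧ E ω ∈ R ⁻¹' B} = P {ω | Y ω ∈ A ∧ E ω ∈ B}
  rw [hjoint A _ hA (hR hB), hjoint A B hA hB]
  refine lintegral_congr_ae (ae_restrict_of_ae ?_)
  filter_upwards [hκR] with a ha
  rw [← Measure.map_apply hR hB, ha]

lemma map_flipOn_pi_withDensity {ι : Type*} [Fintype ι] (J : Finset ι) {f : ℝ → ENNReal}
    (hf : Measurable f) (hf_even : Function.Even f) (hf_int : ∫⁻ x, f x ≠ ⊤) :
    (Measure.pi fun _ : ι => volume.withDensity f).map (flipOn J)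
      = Measure.pi fun _ : ι => volume.withDensity f := by
  have := isFiniteMeasure_withDensity hf_int
  have := isNegInvariant_withDensity (μ := volume) hf hf_even
  exact (measurePreserving_flipOn_pi J _).map_eq

section SENS

variable {N : ℕ}

/-- The pooled scale `S` of the SENS statistic. -/
noncomputable def pooledScale (N₁ N₂ : Finset (Fin N)) (x : Fin N → ℝ) : ℝ :=
  Real.sqrt (((N : ℝ) / ((N₁.card : ℝ) * (N₂.card : ℝ))) *
    ((((N₁.card : ℝ) - 1) * sampleVar N₁ x + ((N₂.card : ℝ) - 1) * sampleVar N₂ x) /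
      ((N : ℝ) - 2)))

/-- The pair `(g (V / S), g (V⁰ / S))` computed from the observations `x` of one unit. -/
noncomputable def sensPair (g : ℝ → ℝ) (N₁ N₂ : Finset (Fin N)) (x : Fin N → ℝ) : ℝ × ℝ :=
  (g ((sampleMean N₁ x + sampleMean N₂ x) / pooledScale N₁ N₂ x),
    g ((sampleMean N₁ x - sampleMean N₂ x) / pooledScale N₁ N₂ x))

lemma pooledScale_flipOn {N₁ N₂ : Finset (Fin N)} (hN : Disjoint N₁ N₂) (x : Fin N → ℝ) :
    pooledScale N₁ N₂ (flipOn N₂ x) = pooledScale N₁ N₂ x := by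
  rw [pooledScale, sampleVar_flipOn_of_disjoint hN, sampleVar_flipOn_self, pooledScale]

lemma sensPair_flipOn (g : ℝ → ℝ) {N₁ N₂ : Finset (Fin N)} (hN : Disjoint N₁ N₂)
    (x : Fin N → ℝ) : sensPair g N₁ N₂ (flipOn N₂ x) = (sensPair g N₁ N₂ x).swap := by
  simp only [sensPair, pooledScale_flipOn hN, sampleMean_flipOn_of_disjoint hN,
    sampleMean_flipOn_self, ← sub_eq_add_neg, sub_neg_eq_add, Prod.swap_prod_mk]

lemma measurable_pooledScale (N₁ N₂ : Finset (Fin N)) : Measurable (pooledScale N₁ N₂) :=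
  Real.continuous_sqrt.measurable.comp <| measurable_const.mul <|
    ((measurable_const.mul (measurable_sampleVar N₁)).add
      (measurable_const.mul (measurable_sampleVar N₂))).div_const _

lemma measurable_sensPair {g : ℝ → ℝ} (hg : Measurable g) (N₁ N₂ : Finset (Fin N)) :
    Measurable (sensPair g N₁ N₂) :=
  (hg.comp (((measurable_sampleMean N₁).add (measurable_sampleMean N₂)).div
      (measurable_pooledScale N₁ N₂))).prodMk
    (hg.comp (((measurable_sampleMean N₁).sub (measurable_sampleMean N₂)).div
      (measurable_pooledScale N₁ N₂)))

end SENS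

lemma measurable_swapSet {m : ℕ} (J : Finset (Fin m)) : Measurable (swapSet J) := by
  refine Measurable.prodMk (measurable_pi_lambda _ fun j => ?_) (measurable_pi_lambda _ fun j => ?_)
  all_goals
    by_cases hj : j ∈ J <;> simp only [hj, if_true, if_false]
    all_goals fun_prop

section Vectors

variable {m : ℕ} {n : Fin m → ℕ}

/-- The vectors `(T, T⁰)` computed from the observations `x k` of all units `k`. -/
noncomputable def sensVectors (g : Fin m → ℝ → ℝ) (N₁ N₂ : (k : Fin m) → Finset (Fin (n k)))
    (x : (k : Fin m) → Fin (n k) → ℝ) : (Fin m → ℝ) × (Fin m → ℝ) :=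
  (fun k => (sensPair (g k) (N₁ k) (N₂ k) (x k)).1,
    fun k => (sensPair (g k) (N₁ k) (N₂ k) (x k)).2)

lemma measurable_sensVectors {g : Fin m → ℝ → ℝ} (hg : ∀ k, Measurable (g k))
    (N₁ N₂ : (k : Fin m) → Finset (Fin (n k))) : Measurable (sensVectors g N₁ N₂) :=
  (measurable_pi_lambda _ fun k =>
      (measurable_sensPair (hg k) _ _).fst.comp (measurable_pi_apply k)).prodMk
    (measurable_pi_lambda _ fun k =>
      (measurable_sensPair (hg k) _ _).snd.comp (measurable_pi_apply k))

lemma measurable_piSplitAt_symm {ι : Type*} [DecidableEq ι] {β : ι → Type*}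
    [∀ k, MeasurableSpace (β k)] (i : ι) : Measurable (Equiv.piSplitAt i β).symm :=
  measurable_pi_lambda _ fun k => by
    by_cases hk : k = i
    · subst hk
      simpa using measurable_fst
    · simp only [Equiv.piSplitAt_symm_apply, hk, dite_false]
      exact (measurable_pi_apply _).comp measurable_snd

lemma sensVectors_piSplitAt_symm_flipOn (g : Fin m → ℝ → ℝ)
    {N₁ N₂ : (k : Fin m) → Finset (Fin (n k))} {i : Fin m} (hN : Disjoint (N₁ i) (N₂ i))
    (b : Fin (n i) → ℝ) (a : (k : {k // k ≠ i}) → Fin (n k) → ℝ) :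
    sensVectors g N₁ N₂ ((Equiv.piSplitAt i _).symm (flipOn (N₂ i) b, a))
      = swapSet {i} (sensVectors g N₁ N₂ ((Equiv.piSplitAt i _).symm (b, a))) := by
  have hflip := sensPair_flipOn (g i) hN b
  refine Prod.ext (funext fun k => ?_) (funext fun k => ?_) <;> by_cases hk : k = i
  · subst hk; simpa [sensVectors, swapSet] using congrArg Prod.fst hflip
  · simp [sensVectors, swapSet, hk]
  · subst hk; simpa [sensVectors, swapSet] using congrArg Prod.snd hflip
  · simp [sensVectors, swapSet, hk]

end Vectors

theorem sens_one_sample_pairwise_exchangeability_general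
    {Ω : Type*} [MeasurableSpace Ω] (P : Measure Ω) [IsProbabilityMeasure P]
    (m : ℕ) (n : Fin m → ℕ)
    (μ : Fin m → ℝ)
    (ε : (i : Fin m) → Fin (n i) → Ω → ℝ)
    (hεmeas : ∀ i j, Measurable (ε i j))
    (X : (i : Fin m) → Fin (n i) → Ω → ℝ)
    (hXdef : ∀ i j ω, X i j ω = μ i + ε i j ω)
    -- For every null unit `i`, the conditional law of the error vector of unit `i`
    -- given the observations of all other units is a.s. an i.i.d. product of a
    -- probability measure with a density symmetric about zero.
    (hcond : ∀ i : Fin m, μ i = 0 →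
      ∃ (κ : Kernel ((k : {k : Fin m // k ≠ i}) → Fin (n k.1) → ℝ) (Fin (n i) → ℝ))
        (f : ((k : {k : Fin m // k ≠ i}) → Fin (n k.1) → ℝ) → ℝ → ENNReal),
        (∀ (A : Set ((k : {k : Fin m // k ≠ i}) → Fin (n k.1) → ℝ))
            (B : Set (Fin (n i) → ℝ)), MeasurableSet A → MeasurableSet B →
          P {ω | (fun k : {k : Fin m // k ≠ i} => fun j => X k.1 j ω) ∈ A ∧
              (fun j => ε i j ω) ∈ B}
            = ∫⁻ a in A, κ a B
                ∂(Measure.map (fun ω => fun k : {k : Fin m // k ≠ i} => fun j => X k.1 j ω) P)) ∧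
        (∀ᵐ a ∂(Measure.map (fun ω => fun k : {k : Fin m // k ≠ i} => fun j => X k.1 j ω) P),
          Measurable (f a) ∧ (∫⁻ x, f a x = 1) ∧ (∀ x : ℝ, f a (-x) = f a x) ∧
          κ a = Measure.pi fun _ : Fin (n i) => (volume : Measure ℝ).withDensity (f a)))
    -- the within-unit partitions, of sizes ⌈n i / 2⌉ and n i − ⌈n i / 2⌉
    (N₁ N₂ : (i : Fin m) → Finset (Fin (n i)))
    (hdisj : ∀ i, Disjoint (N₁ i) (N₂ i))
    -- an arbitrary fixed Borel measurable transformation for each unit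
    (h : Fin m → ℝ → ℝ) (hh : ∀ i, Measurable (h i))
    (V V0 S T T0 : Fin m → Ω → ℝ)
    (hV : ∀ i ω, V i ω
      = sampleMean (N₁ i) (fun j => X i j ω) + sampleMean (N₂ i) (fun j => X i j ω))
    (hV0 : ∀ i ω, V0 i ω
      = sampleMean (N₁ i) (fun j => X i j ω) - sampleMean (N₂ i) (fun j => X i j ω))
    (hS : ∀ i ω, S i ω = Real.sqrt
      (((n i : ℝ) / (((N₁ i).card : ℝ) * ((N₂ i).card : ℝ))) *
        (((((N₁ i).card : ℝ) - 1) * sampleVar (N₁ i) (fun j => X i j ω) +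
          (((N₂ i).card : ℝ) - 1) * sampleVar (N₂ i) (fun j => X i j ω)) / ((n i : ℝ) - 2))))
    (hT : ∀ i ω, T i ω = h i (V i ω / S i ω))
    (hT0 : ∀ i ω, T0 i ω = h i (V0 i ω / S i ω))
    (i : Fin m) (hi : μ i = 0) :
    Measure.map (swapSet {i})
        (Measure.map (fun ω => (fun j => T j ω, fun j => T0 j ω)) P)
      = Measure.map (fun ω => (fun j => T j ω, fun j => T0 j ω)) P := by
  obtain ⟨κ, f, hjoint, hκ⟩ := hcond i hi
  set Y : Ω → (k : {k : Fin m // k ≠ i}) → Fin (n k) → ℝ := fun ω k j => X k.1 j ω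
  set E : Ω → Fin (n i) → ℝ := fun ω j => ε i j ω
  have hX : ∀ k j, Measurable (X k j) := fun k j =>
    (funext (hXdef k j)).symm ▸ measurable_const.add (hεmeas k j)
  have hY : Measurable Y := measurable_pi_lambda _ fun k => measurable_pi_lambda _ fun j => hX k.1 j
  have hE : Measurable E := measurable_pi_lambda _ fun j => hεmeas i j
  have hYE : Measurable fun ω => (Y ω, E ω) := hY.prodMk hE
  have hflip : MeasurePreserving (Prod.map id (flipOn (N₂ i))) (P.map fun ω => (Y ω, E ω))
      (P.map fun ω => (Y ω, E ω)) :=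
    measurePreserving_prodMap_id_of_ae_map_kernel hY hE hjoint
      (measurable_flipOn _) <| hκ.mono fun a ⟨hf, hf_int, hf_even, hκa⟩ => by
        rw [hκa, map_flipOn_pi_withDensity _ hf hf_even (hf_int ▸ ENNReal.one_ne_top)]
  set G := fun p : ((k : {k : Fin m // k ≠ i}) → Fin (n k) → ℝ) × (Fin (n i) → ℝ) =>
    sensVectors h N₁ N₂ ((Equiv.piSplitAt i _).symm p.swap)
  have hG : Measurable G :=
    (measurable_sensVectors hh N₁ N₂).comp ((measurable_piSplitAt_symm i).comp measurable_swap)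
  have hdata : ∀ ω, (Equiv.piSplitAt i _).symm (E ω, Y ω) = fun k j => X k j ω := fun ω => by
    funext k j
    by_cases hk : k = i
    · subst hk; simp [E, hXdef, hi]
    · simp [Y, hk]
  have hTT0 : (fun ω => (fun k => T k ω, fun k => T0 k ω)) = G ∘ fun ω => (Y ω, E ω) := by
    funext ω
    simp only [G, Function.comp_apply, Prod.swap_prod_mk, hdata, sensVectors, sensPair,
      pooledScale, hT, hT0, hV, hV0, hS]
  rw [hTT0, ← Measure.map_map hG hYE]
  exact ((hG.measurePreserving _).of_semiconj hflip
    (fun p => sensVectors_piSplitAt_symm_flipOn h (hdisj i) p.2 p.1) (measurable_swapSet _)).map_eq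

/-- **One-sample pairwise exchangeability of SENS samples (Theorem 1).**
Under the one-sample model `X i j = μ i + ε i j` with `n i ≥ 4` observations per unit,
if for every null unit `i` (i.e. `μ i = 0`) the conditional distribution of the error
vector of unit `i` given the observations of all other units is (a.s.) an `n i`-fold
product of a single probability measure on `ℝ` admitting a density symmetric about zero,
then the SENS test and calibration vectors `T`, `T⁰` are pairwise exchangeable at every
null index `i`: the joint law of `(T, T⁰)` is invariant under swapping `T i` and `T⁰ i`. -/
theorem sens_one_sample_pairwise_exchangeability
    {Ω : Type*} [MeasurableSpace Ω] (P : Measure Ω) [IsProbabilityMeasure P]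
    (m : ℕ) (n : Fin m → ℕ) (hn : ∀ i, 4 ≤ n i)
    (μ : Fin m → ℝ)
    (ε : (i : Fin m) → Fin (n i) → Ω → ℝ)
    (hεmeas : ∀ i j, Measurable (ε i j))
    (X : (i : Fin m) → Fin (n i) → Ω → ℝ)
    (hXdef : ∀ i j ω, X i j ω = μ i + ε i j ω)
    -- For every null unit `i`, the conditional law of the error vector of unit `i`
    -- given the observations of all other units is a.s. an i.i.d. product of a
    -- probability measure with a density symmetric about zero.
    (hcond : ∀ i : Fin m, μ i = 0 →
      ∃ (κ : Kernel ((k : {k : Fin m // k ≠ i}) → Fin (n k.1) → ℝ) (Fin (n i) → ℝ))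
        (f : ((k : {k : Fin m // k ≠ i}) → Fin (n k.1) → ℝ) → ℝ → ENNReal),
        (∀ (A : Set ((k : {k : Fin m // k ≠ i}) → Fin (n k.1) → ℝ))
            (B : Set (Fin (n i) → ℝ)), MeasurableSet A → MeasurableSet B →
          P {ω | (fun k : {k : Fin m // k ≠ i} => fun j => X k.1 j ω) ∈ A ∧
              (fun j => ε i j ω) ∈ B}
            = ∫⁻ a in A, κ a B
                ∂(Measure.map (fun ω => fun k : {k : Fin m // k ≠ i} => fun j => X k.1 j ω) P)) ∧
        (∀ᵐ a ∂(Measure.map (fun ω => fun k : {k : Fin m // k ≠ i} => fun j => X k.1 j ω) P),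
          Measurable (f a) ∧ (∫⁻ x, f a x = 1) ∧ (∀ x : ℝ, f a (-x) = f a x) ∧
          κ a = Measure.pi fun _ : Fin (n i) => (volume : Measure ℝ).withDensity (f a)))
    -- the within-unit partitions, of sizes ⌈n i / 2⌉ and n i − ⌈n i / 2⌉
    (N₁ N₂ : (i : Fin m) → Finset (Fin (n i)))
    (hdisj : ∀ i, Disjoint (N₁ i) (N₂ i))
    (hunion : ∀ i, N₁ i ∪ N₂ i = Finset.univ)
    (hcard : ∀ i, (N₁ i).card = (n i + 1) / 2)
    -- an arbitrary fixed Borel measurable transformation for each unit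
    (h : Fin m → ℝ → ℝ) (hh : ∀ i, Measurable (h i))
    (V V0 S T T0 : Fin m → Ω → ℝ)
    (hV : ∀ i ω, V i ω
      = sampleMean (N₁ i) (fun j => X i j ω) + sampleMean (N₂ i) (fun j => X i j ω))
    (hV0 : ∀ i ω, V0 i ω
      = sampleMean (N₁ i) (fun j => X i j ω) - sampleMean (N₂ i) (fun j => X i j ω))
    (hS : ∀ i ω, S i ω = Real.sqrt
      (((n i : ℝ) / (((N₁ i).card : ℝ) * ((N₂ i).card : ℝ))) *
        (((((N₁ i).card : ℝ) - 1) * sampleVar (N₁ i) (fun j => X i j ω) +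
          (((N₂ i).card : ℝ) - 1) * sampleVar (N₂ i) (fun j => X i j ω)) / ((n i : ℝ) - 2))))
    (hT : ∀ i ω, T i ω = h i (V i ω / S i ω))
    (hT0 : ∀ i ω, T0 i ω = h i (V0 i ω / S i ω))
    (i : Fin m) (hi : μ i = 0) :
    Measure.map (swapSet {i})
        (Measure.map (fun ω => (fun j => T j ω, fun j => T0 j ω)) P)
      = Measure.map (fun ω => (fun j => T j ω, fun j => T0 j ω)) P :=
  sens_one_sample_pairwise_exchangeability_general P m n μ ε hεmeas X hXdef hcond N₁ N₂ hdisj h hh V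
    V0 S T T0 hV hV0 hS hT hT0 i hi
end

section
/- Swap-invariant score functions preserve pairwise exchangeability (Proposition 1). Let T = (T_1,…,T_m) and T⁰ = (T_1⁰,…,T_m⁰) be real random vectors that are pairwise exchangeable at every index i in a fixed set H₀ ⊆ [m]. Let g : ℝ × (ℝ^m × ℝ^m) → ℝ be a measurable function satisfying, for every subset J ⊆ [m] and all (t, t⁰) ∈ ℝ^m × ℝ^m, g(· ; (t, t⁰)_{swap(J)}) = g(· ; (t, t⁰)), where (t, t⁰)_{swap(J)} denotes the pair obtained by exchanging t_i and t_i⁰ for each i ∈ J. Define the scores U_i = g(T_i ; (T, T⁰)) and U_i⁰ = g(T_i⁰ ; (T, T⁰)) for i ∈ [m]. Then for every i ∈ H₀, the vectors U = (U_1,…,U_m) and U⁰ = (U_1⁰,…,U_m⁰) are pairwise exchangeable at index i, i.e., the joint law of (U, U⁰) on ℝ^m × ℝ^m is invariant under swapping U_i and U_i⁰. -/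
open MeasureTheory ProbabilityTheory
open scoped Classical

/-- **Swap-invariant score functions preserve pairwise exchangeability (Proposition 1).**
If `(T, T⁰)` are pairwise exchangeable at every index of `H₀` and the score function `g`
is invariant under swapping any subset of coordinate pairs of its data argument, then
the scores `U i = g (T i) (T, T⁰)` and `U⁰ i = g (T⁰ i) (T, T⁰)` are again pairwise
exchangeable at every index of `H₀`. -/
theorem swap_invariant_scores_pairwise_exchangeable
    {Ω : Type*} [MeasurableSpace Ω] (P : Measure Ω) [IsProbabilityMeasure P]
    (m : ℕ) (H0 : Set (Fin m))
    (T T0 : Fin m → Ω → ℝ)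
    (hTmeas : ∀ i, Measurable (T i)) (hT0meas : ∀ i, Measurable (T0 i))
    -- pairwise exchangeability of (T, T⁰) at every index of H₀
    (hexch : ∀ i ∈ H0,
      Measure.map (swapSet {i})
          (Measure.map (fun ω => (fun j => T j ω, fun j => T0 j ω)) P)
        = Measure.map (fun ω => (fun j => T j ω, fun j => T0 j ω)) P)
    (g : ℝ → (Fin m → ℝ) × (Fin m → ℝ) → ℝ)
    (hgmeas : Measurable (Function.uncurry g))
    -- swapping invariance of the score function in its data argument
    (hginv : ∀ (J : Finset (Fin m)) (t : ℝ) (p : (Fin m → ℝ) × (Fin m → ℝ)),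
      g t (swapSet J p) = g t p)
    (U U0 : Fin m → Ω → ℝ)
    (hU : ∀ i ω, U i ω = g (T i ω) (fun j => T j ω, fun j => T0 j ω))
    (hU0 : ∀ i ω, U0 i ω = g (T0 i ω) (fun j => T j ω, fun j => T0 j ω))
    (i : Fin m) (hi : i ∈ H0) :
    Measure.map (swapSet {i})
        (Measure.map (fun ω => (fun j => U j ω, fun j => U0 j ω)) P)
      = Measure.map (fun ω => (fun j => U j ω, fun j => U0 j ω)) P := by
    classical
  -- the coordinatewise score map
  set Φ : (Fin m → ℝ) × (Fin m → ℝ) → (Fin m → ℝ) × (Fin m → ℝ) :=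
    fun p => (fun j => g (p.1 j) p, fun j => g (p.2 j) p) with hΦ
  have hΦmeas : Measurable Φ := by
    apply Measurable.prod
    · refine measurable_pi_lambda _ (fun j => ?_)
      exact show Measurable (Function.uncurry g ∘ fun p : (Fin m → ℝ) × (Fin m → ℝ) =>
          (p.1 j, p)) from
        hgmeas.comp (((measurable_pi_apply j).comp measurable_fst).prodMk measurable_id)
    · refine measurable_pi_lambda _ (fun j => ?_)
      exact show Measurable (Function.uncurry g ∘ fun p : (Fin m → ℝ) × (Fin m → ℝ) =>
          (p.2 j, p)) from
        hgmeas.comp (((measurable_pi_apply j).comp measurable_snd).prodMk measurable_id)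
  have hswapmeas : Measurable (swapSet (m := m) {i}) := by
    apply Measurable.prod
    · refine measurable_pi_lambda _ (fun j => ?_)
      by_cases h : j ∈ ({i} : Finset (Fin m)) <;>
        simp only [swapSet, h, if_true, if_false] <;>
        [exact (measurable_pi_apply j).comp measurable_snd;
         exact (measurable_pi_apply j).comp measurable_fst]
    · refine measurable_pi_lambda _ (fun j => ?_)
      by_cases h : j ∈ ({i} : Finset (Fin m)) <;>
        simp only [swapSet, h, if_true, if_false] <;>
        [exact (measurable_pi_apply j).comp measurable_fst;
         exact (measurable_pi_apply j).comp measurable_snd]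
  have hTT0meas : Measurable (fun ω => (fun j => T j ω, fun j => T0 j ω) :
      Ω → (Fin m → ℝ) × (Fin m → ℝ)) :=
    (measurable_pi_lambda _ (fun j => hTmeas j)).prodMk
      (measurable_pi_lambda _ (fun j => hT0meas j))
  -- Φ commutes with swapSet {i}
  have hcomm : Φ ∘ swapSet {i} = swapSet {i} ∘ Φ := by
    funext p
    have hg1 : ∀ t, g t (swapSet {i} p) = g t p := fun t => hginv {i} t p
    simp only [Function.comp_apply, hΦ, hg1]
    refine Prod.ext ?_ ?_ <;> funext j <;>
      rcases eq_or_ne j i with h | h <;>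
      simp [swapSet, h]
  -- (U, U0) = Φ ∘ (T, T0)
  have hUU0 : (fun ω => (fun j => U j ω, fun j => U0 j ω) :
      Ω → (Fin m → ℝ) × (Fin m → ℝ))
      = Φ ∘ (fun ω => (fun j => T j ω, fun j => T0 j ω)) := by
    funext ω
    refine Prod.ext ?_ ?_ <;> funext j <;> simp [hΦ, hU, hU0]
  rw [hUU0]
  rw [← Measure.map_map hΦmeas hTT0meas,
      Measure.map_map hswapmeas hΦmeas,
      ← hcomm,
      ← Measure.map_map hΦmeas hswapmeas,
      hexch i hi]
end

section
/- Pairwise exchangeability of the kernel-based lfdr-type scores (Proposition 2). Let T = (T_1,…,T_m), T⁰ = (T_1⁰,…,T_m⁰) be real random vectors that are pairwise exchangeable at every index i in a fixed set H₀ ⊆ [m]. Let K : ℝ → ℝ be a nonnegative measurable symmetric kernel (K(−x) = K(x)), and write K_h(x) = h⁻¹K(x/h). Let h_mix be a strictly positive bandwidth that is a function of the multiset of the 2m values (T_1,…,T_m,T_1⁰,…,T_m⁰) (i.e., invariant under every permutation of these 2m values), and define f̂_mix(t) = (2m)⁻¹ Σ_{i=1}^m [K_{h_mix}(t − T_i)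 + K_{h_mix}(t − T_i⁰)]. Define the filtered sample T̃_i⁰ = T_i if |T_i| ≤ |T_i⁰| and T̃_i⁰ = T_i⁰ otherwise; let h₀ be a strictly positive bandwidth invariant under every permutation of the 2m values (T̃_1⁰,…,T̃_m⁰,−T̃_1⁰,…,−T̃_m⁰), and define f̂₀(t) = (2m)⁻¹ Σ_{i=1}^m [K_{h₀}(t − T̃_i⁰) + K_{h₀}(t + T̃_i⁰)]. Set g(t) = f̂₀(t)/f̂_mix(t) (with the convention that division by zero yields zero), and define U_i = g(T_i), U_i⁰ = g(T_i⁰). Then for every i ∈ H₀, U = (U_1,…,U_m) and U⁰ = (U_1⁰,…,U_m⁰) are pairwise exchangeable at index i: the joint law of (U, U⁰) is invariant under swapping U_i and U_i⁰. -/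
open MeasureTheory ProbabilityTheory
open scoped Classical

/-- **Pairwise exchangeability of the kernel-based lfdr-type scores (Proposition 2).**
If `(T, T⁰)` are pairwise exchangeable at every index of `H₀`, `K` is a nonnegative
measurable symmetric kernel, the bandwidths are strictly positive and permutation
invariant functions of the pooled `2m` values, `f̂_mix` is the kernel estimator based on
the mixed sample, `T̃⁰` is the filtered sample, `f̂₀` is the zero-symmetric kernel
estimator based on `T̃⁰`, and `g = f̂₀ / f̂_mix`, then the scores `U i = g (T i)` and
`U⁰ i = g (T⁰ i)` are pairwise exchangeable at every index of `H₀`. -/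
theorem kernel_lfdr_scores_pairwise_exchangeable
    {Ω : Type*} [MeasurableSpace Ω] (P : Measure Ω) [IsProbabilityMeasure P]
    (m : ℕ) (H0 : Set (Fin m))
    (T T0 : Fin m → Ω → ℝ)
    (hTmeas : ∀ i, Measurable (T i)) (hT0meas : ∀ i, Measurable (T0 i))
    -- pairwise exchangeability of (T, T⁰) at every index of H₀
    (hexch : ∀ i ∈ H0,
      Measure.map (swapSet {i})
          (Measure.map (fun ω => (fun j => T j ω, fun j => T0 j ω)) P)
        = Measure.map (fun ω => (fun j => T j ω, fun j => T0 j ω)) P)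
    -- a nonnegative measurable symmetric kernel
    (K : ℝ → ℝ) (hKmeas : Measurable K) (hKnn : ∀ x, 0 ≤ K x)
    (hKsymm : ∀ x, K (-x) = K x)
    -- the mixture bandwidth: strictly positive, measurable, and invariant under every
    -- permutation of the pooled 2m values
    (hmix : (Fin m ⊕ Fin m → ℝ) → ℝ) (hmixmeas : Measurable hmix)
    (hmixpos : ∀ v, 0 < hmix v)
    (hmixinv : ∀ (σ : Equiv.Perm (Fin m ⊕ Fin m)) (v : Fin m ⊕ Fin m → ℝ),
      hmix (v ∘ σ) = hmix v)
    -- the null bandwidth: strictly positive, measurable, and invariant under every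
    -- permutation of its 2m input values
    (h0 : (Fin m ⊕ Fin m → ℝ) → ℝ) (h0meas : Measurable h0)
    (h0pos : ∀ v, 0 < h0 v)
    (h0inv : ∀ (σ : Equiv.Perm (Fin m ⊕ Fin m)) (v : Fin m ⊕ Fin m → ℝ),
      h0 (v ∘ σ) = h0 v)
    -- the filtered sample  T̃⁰
    (tilde : ((Fin m → ℝ) × (Fin m → ℝ)) → Fin m → ℝ)
    (htilde : ∀ p i, tilde p i = if |p.1 i| ≤ |p.2 i| then p.1 i else p.2 i)
    -- the kernel estimator of the mixture density, with bandwidth evaluated at the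
    -- pooled sample (T, T⁰)
    (fmixhat : ℝ → ((Fin m → ℝ) × (Fin m → ℝ)) → ℝ)
    (hfmix : ∀ t p, fmixhat t p =
      (∑ i : Fin m,
        ((hmix (Sum.elim p.1 p.2))⁻¹ * K ((t - p.1 i) / hmix (Sum.elim p.1 p.2)) +
         (hmix (Sum.elim p.1 p.2))⁻¹ * K ((t - p.2 i) / hmix (Sum.elim p.1 p.2)))) /
        (2 * m))
    -- the zero-symmetric kernel estimator of the null density, with bandwidth evaluated
    -- at the pooled values (T̃⁰, −T̃⁰)
    (f0hat : ℝ → ((Fin m → ℝ) × (Fin m → ℝ)) → ℝ)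
    (hf0 : ∀ t p, f0hat t p =
      (∑ i : Fin m,
        ((h0 (Sum.elim (tilde p) (fun k => -(tilde p k))))⁻¹ *
            K ((t - tilde p i) / h0 (Sum.elim (tilde p) (fun k => -(tilde p k)))) +
         (h0 (Sum.elim (tilde p) (fun k => -(tilde p k))))⁻¹ *
            K ((t + tilde p i) / h0 (Sum.elim (tilde p) (fun k => -(tilde p k)))))) /
        (2 * m))
    -- the lfdr-type score function g = f̂₀ / f̂_mix (division by zero yields zero)
    (g : ℝ → ((Fin m → ℝ) × (Fin m → ℝ)) → ℝ)
    (hg : ∀ t p, g t p = f0hat t p / fmixhat t p)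
    (U U0 : Fin m → Ω → ℝ)
    (hU : ∀ i ω, U i ω = g (T i ω) (fun j => T j ω, fun j => T0 j ω))
    (hU0 : ∀ i ω, U0 i ω = g (T0 i ω) (fun j => T j ω, fun j => T0 j ω))
    (i : Fin m) (hi : i ∈ H0) :
    Measure.map (swapSet {i})
        (Measure.map (fun ω => (fun j => U j ω, fun j => U0 j ω)) P)
      = Measure.map (fun ω => (fun j => U j ω, fun j => U0 j ω)) P := by

  classical
  -- shorthand for the two bandwidth functionals
  set Hm : ((Fin m → ℝ) × (Fin m → ℝ)) → ℝ := fun p => hmix (Sum.elim p.1 p.2) with hHm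
  set Hz : ((Fin m → ℝ) × (Fin m → ℝ)) → ℝ :=
    fun p => h0 (Sum.elim (tilde p) (fun k => -(tilde p k))) with hHz
  set sw : ((Fin m → ℝ) × (Fin m → ℝ)) → ((Fin m → ℝ) × (Fin m → ℝ)) :=
    swapSet {i} with hswdef
  have sw1 : ∀ p j, (sw p).1 j = if j = i then p.2 j else p.1 j := by
    intro p j; simp [hswdef, swapSet]
  have sw2 : ∀ p j, (sw p).2 j = if j = i then p.1 j else p.2 j := by
    intro p j; simp [hswdef, swapSet]
  -- invariance of the mixture bandwidth under the swap
  have hHmsw : ∀ p, Hm (sw p) = Hm p := by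
    intro p
    have : Sum.elim (sw p).1 (sw p).2
        = (Sum.elim p.1 p.2) ∘ (Equiv.swap (Sum.inl i) (Sum.inr i) : Equiv.Perm (Fin m ⊕ Fin m)) := by
      funext s
      rcases s with j | j <;> by_cases hj : j = i <;>
        simp [sw1, sw2, hj, Equiv.swap_apply_def]
    simp only [hHm, this, hmixinv]
  -- invariance of the mixture density estimator under the swap
  have hfmixsw : ∀ t p, fmixhat t (sw p) = fmixhat t p := by
    intro t p
    rw [hfmix, hfmix]
    have hb : Hm (sw p) = Hm p := hHmsw p
    simp only [hHm] at hb
    refine congrArg (fun x => x / (2 * (m : ℝ))) (Finset.sum_congr rfl fun j _ => ?_)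
    rw [show Sum.elim (sw p).1 (sw p).2 = Sum.elim p.1 p.2 ∘ _ from ?_, hmixinv]
    · by_cases hj : j = i
      · subst hj; rw [sw1, sw2]; simp only [if_pos rfl]; exact add_comm _ _
      · rw [sw1, sw2]; simp [hj]
    · exact (Equiv.swap (Sum.inl i) (Sum.inr i) : Equiv.Perm (Fin m ⊕ Fin m))
    · funext s
      rcases s with j | j <;> by_cases hj : j = i <;>
        simp [sw1, sw2, hj, Equiv.swap_apply_def]
  -- behaviour of the filtered sample under the swap
  have htilsw_ne : ∀ p j, j ≠ i → tilde (sw p) j = tilde p j := by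
    intro p j hj
    rw [htilde, htilde, sw1, sw2]
    simp [hj]
  have htilsw_i : ∀ p, tilde (sw p) i = tilde p i ∨ tilde (sw p) i = -(tilde p i) := by
    intro p
    rw [htilde, htilde, sw1, sw2]
    simp only [if_pos rfl]
    by_cases h1 : |p.1 i| ≤ |p.2 i| <;> by_cases h2 : |p.2 i| ≤ |p.1 i|
    · rcases abs_eq_abs.mp (le_antisymm h2 h1) with h | h
      · left; simp [h1, h2, h]
      · right; simp [h1, h2, h]
    · left; simp [h1, h2]
    · left; simp [h1, h2]
    · exact absurd (le_total |p.1 i| |p.2 i|) (by simp [h1, h2])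
  -- invariance of the null density estimator under the swap
  have hf0sw : ∀ t p, f0hat t (sw p) = f0hat t p := by
    intro t p
    rcases htilsw_i p with hc | hc
    · have htil : tilde (sw p) = tilde p := by
        funext j; by_cases hj : j = i
        · subst hj; exact hc
        · exact htilsw_ne p j hj
      rw [hf0, hf0, htil]
    · -- sign flip at coordinate i
      have hperm : Sum.elim (tilde (sw p)) (fun k => -(tilde (sw p) k))
          = (Sum.elim (tilde p) (fun k => -(tilde p k))) ∘
            (Equiv.swap (Sum.inl i) (Sum.inr i) : Equiv.Perm (Fin m ⊕ Fin m)) := by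
        funext s
        rcases s with j | j <;> by_cases hj : j = i <;>
          simp [hj, hc, htilsw_ne p j, Equiv.swap_apply_def]
      have hb : h0 (Sum.elim (tilde (sw p)) (fun k => -(tilde (sw p) k)))
          = h0 (Sum.elim (tilde p) (fun k => -(tilde p k))) := by
        rw [hperm, h0inv]
      rw [hf0, hf0, hb]
      refine congrArg (fun x => x / (2 * (m : ℝ))) (Finset.sum_congr rfl fun j _ => ?_)
      by_cases hj : j = i
      · subst hj
        rw [hc, sub_neg_eq_add, ← sub_eq_add_neg]
        exact add_comm _ _
      · rw [htilsw_ne p j hj]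
  -- invariance of the score function under the swap
  have hgsw : ∀ t p, g t (sw p) = g t p := by
    intro t p; rw [hg, hg, hfmixsw, hf0sw]
  -- the score map
  set Φ : ((Fin m → ℝ) × (Fin m → ℝ)) → ((Fin m → ℝ) × (Fin m → ℝ)) :=
    fun p => (fun j => g (p.1 j) p, fun j => g (p.2 j) p) with hΦ
  have hcomm : ∀ p, Φ (sw p) = sw (Φ p) := by
    intro p
    apply Prod.ext
    · funext j
      show g ((sw p).1 j) (sw p) = (sw (Φ p)).1 j
      rw [hgsw, sw1, sw1]
      by_cases hj : j = i <;> simp [hΦ, hj]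
    · funext j
      show g ((sw p).2 j) (sw p) = (sw (Φ p)).2 j
      rw [hgsw, sw2, sw2]
      by_cases hj : j = i <;> simp [hΦ, hj]
  -- measurability facts
  have htilmeas : ∀ j, Measurable (fun p : (Fin m → ℝ) × (Fin m → ℝ) => tilde p j) := by
    intro j
    have : (fun p : (Fin m → ℝ) × (Fin m → ℝ) => tilde p j)
        = fun p => if |p.1 j| ≤ |p.2 j| then p.1 j else p.2 j := by
      funext p; exact htilde p j
    rw [this]
    exact Measurable.ite
      (measurableSet_le (measurable_fst.eval.abs) (measurable_snd.eval.abs))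
      measurable_fst.eval measurable_snd.eval
  have hHmmeas : Measurable Hm := by
    refine hmixmeas.comp (measurable_pi_lambda _ fun s => ?_)
    rcases s with j | j
    · exact measurable_fst.eval
    · exact measurable_snd.eval
  have hHzmeas : Measurable Hz := by
    refine h0meas.comp (measurable_pi_lambda _ fun s => ?_)
    rcases s with j | j
    · exact htilmeas j
    · exact (htilmeas j).neg
  have hgmeas : ∀ (τ : ((Fin m → ℝ) × (Fin m → ℝ)) → ℝ), Measurable τ →
      Measurable (fun p => g (τ p) p) := by
    intro τ hτ
    have hfm : Measurable (fun p => fmixhat (τ p) p) := by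
      have : (fun p => fmixhat (τ p) p)
          = fun p => (∑ k : Fin m,
              ((Hm p)⁻¹ * K ((τ p - p.1 k) / Hm p) +
               (Hm p)⁻¹ * K ((τ p - p.2 k) / Hm p))) / (2 * m) := by
        funext p; rw [hfmix]
      rw [this]
      refine Measurable.div_const (Finset.measurable_sum _ fun k _ => ?_) _
      exact ((hHmmeas.inv).mul (hKmeas.comp ((hτ.sub measurable_fst.eval).div hHmmeas))).add
        ((hHmmeas.inv).mul (hKmeas.comp ((hτ.sub measurable_snd.eval).div hHmmeas)))
    have hf0m : Measurable (fun p => f0hat (τ p) p) := by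
      have : (fun p => f0hat (τ p) p)
          = fun p => (∑ k : Fin m,
              ((Hz p)⁻¹ * K ((τ p - tilde p k) / Hz p) +
               (Hz p)⁻¹ * K ((τ p + tilde p k) / Hz p))) / (2 * m) := by
        funext p; rw [hf0]
      rw [this]
      refine Measurable.div_const (Finset.measurable_sum _ fun k _ => ?_) _
      exact ((hHzmeas.inv).mul (hKmeas.comp ((hτ.sub (htilmeas k)).div hHzmeas))).add
        ((hHzmeas.inv).mul (hKmeas.comp ((hτ.add (htilmeas k)).div hHzmeas)))
    have : (fun p => g (τ p) p) = fun p => f0hat (τ p) p / fmixhat (τ p) p := by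
      funext p; exact hg _ _
    rw [this]
    exact hf0m.div hfm
  have hΦmeas : Measurable Φ := by
    refine Measurable.prod ?_ ?_
    · exact measurable_pi_lambda _ fun j => hgmeas _ measurable_fst.eval
    · exact measurable_pi_lambda _ fun j => hgmeas _ measurable_snd.eval
  have hswmeas : Measurable sw := by
    refine Measurable.prod (measurable_pi_lambda _ fun j => ?_)
      (measurable_pi_lambda _ fun j => ?_) <;>
    · by_cases hj : j ∈ ({i} : Finset (Fin m)) <;>
        simp only [hswdef, swapSet, hj, if_true, if_false]
      · first
        | exact measurable_snd.eval
        | exact measurable_fst.eval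
      · first
        | exact measurable_fst.eval
        | exact measurable_snd.eval
  have hTpair : Measurable (fun ω => ((fun j => T j ω), (fun j => T0 j ω))) :=
    Measurable.prod (measurable_pi_lambda _ fun j => hTmeas j)
      (measurable_pi_lambda _ fun j => hT0meas j)
  -- the score pair is Φ composed with the statistic pair
  have hUeq : (fun ω => ((fun j => U j ω), (fun j => U0 j ω)))
      = Φ ∘ (fun ω => ((fun j => T j ω), (fun j => T0 j ω))) := by
    funext ω
    apply Prod.ext
    · funext j; simp only [Function.comp_apply, hΦ]; exact hU j ω
    · funext j; simp only [Function.comp_apply, hΦ]; exact hU0 j ω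
  have hswΦ : sw ∘ Φ = Φ ∘ sw := by
    funext p; exact (hcomm p).symm
  rw [hUeq, ← Measure.map_map hΦmeas hTpair]
  rw [Measure.map_map hswmeas hΦmeas, hswΦ, ← Measure.map_map hΦmeas hswmeas]
  rw [hexch i hi]
end

section
/- Equivalence of the mirror thresholding rule and score thresholding (Lemma A.1). Fix α ∈ (0,1), m ≥ 1, and strictly positive real numbers U_1,…,U_m, U_1⁰,…,U_m⁰ with U_i ≠ U_i⁰ for every i. Define G_i = sign(U_i⁰ − U_i) · max(exp(−U_i), exp(−U_i⁰)), τ = inf{ λ ∈ {|G_1|,…,|G_m|} : (1 + Σ_{j=1}^m 1{G_j ≤ −λ}) / max(Σ_{j=1}^m 1{G_j ≥ λ}, 1) ≤ α } (with τ = +∞ if the set is empty), and τ' = sup{ λ ∈ {U_1,…,U_m,U_1⁰,…,U_m⁰} : (1 + Σ_{j=1}^m 1{U_j⁰ ≤ min(U_j, λ)}) / max(Σ_{j=1}^m 1{U_j ≤ min(U_j⁰, λ)}, 1) ≤ α } (with τ' = −∞ if the set is empty). Then for every i ∈ [m], 1{G_i ≥ τ} = 1{U_i ≤ min(U_i⁰,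 τ')}; in particular, the rejection set {i : G_i ≥ τ} equals {i : U_i ≤ U_i⁰ and U_i ≤ τ'}. -/
open scoped Classical

/-- The FDP-hat condition on the `U`-scale. -/
def mirrorQ (m : ℕ) (α : ℝ) (U U0 : Fin m → ℝ) (x : ℝ) : Prop :=
  ((1 : ℝ) + ((Finset.univ.filter fun j => U0 j ≤ min (U j) x).card : ℝ)) /
    max ((Finset.univ.filter fun j => U j ≤ min (U0 j) x).card : ℝ) 1 ≤ α

/-- The FDP-hat condition on the `G`-scale. -/
def mirrorP (m : ℕ) (α : ℝ) (G : Fin m → ℝ) (x : ℝ) : Prop :=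
  ((1 : ℝ) + ((Finset.univ.filter fun j => G j ≤ -x).card : ℝ)) /
    max ((Finset.univ.filter fun j => x ≤ G j).card : ℝ) 1 ≤ α

lemma corr_lemma {m : ℕ} (U U0 G : Fin m → ℝ) (hne : ∀ i, U i ≠ U0 i)
    (hG : ∀ i, G i = Real.sign (U0 i - U i) * max (Real.exp (-U i)) (Real.exp (-U0 i)))
    (l : ℝ) (j : Fin m) :
    ((G j ≤ -Real.exp (-l)) ↔ U0 j ≤ min (U j) l) ∧
    ((Real.exp (-l) ≤ G j) ↔ U j ≤ min (U0 j) l) := by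
  rcases lt_or_gt_of_ne (hne j) with h | h
  · have hGj : G j = Real.exp (-U j) := by
      rw [hG j, Real.sign_of_pos (by linarith : (0:ℝ) < U0 j - U j), one_mul,
        max_eq_left (Real.exp_le_exp.mpr (by linarith))]
    constructor
    · constructor
      · intro hle
        rw [hGj] at hle
        have e1 := Real.exp_pos (-U j); have e2 := Real.exp_pos (-l)
        exfalso; linarith
      · intro hle
        have := le_trans hle (min_le_left _ _)
        exfalso; linarith
    · rw [hGj, Real.exp_le_exp, le_min_iff]
      constructor
      · intro hl; exact ⟨h.le, by linarith⟩
      · rintro ⟨_, hl⟩; linarith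
  · have hGj : G j = -Real.exp (-U0 j) := by
      rw [hG j, Real.sign_of_neg (by linarith : U0 j - U j < 0), neg_one_mul,
        max_eq_right (Real.exp_le_exp.mpr (by linarith))]
    constructor
    · rw [hGj, neg_le_neg_iff, Real.exp_le_exp, le_min_iff]
      constructor
      · intro hl; exact ⟨h.le, by linarith⟩
      · rintro ⟨_, hl⟩; linarith
    · constructor
      · intro hle
        rw [hGj] at hle
        have e1 := Real.exp_pos (-U0 j); have e2 := Real.exp_pos (-l)
        exfalso; linarith
      · intro hle
        have := le_trans hle (min_le_left _ _)
        exfalso; linarith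

lemma abs_lemma {m : ℕ} (U U0 G : Fin m → ℝ) (hne : ∀ i, U i ≠ U0 i)
    (hG : ∀ i, G i = Real.sign (U0 i - U i) * max (Real.exp (-U i)) (Real.exp (-U0 i)))
    (j : Fin m) : |G j| = Real.exp (-(min (U j) (U0 j))) := by
  rcases lt_or_gt_of_ne (hne j) with h | h
  · have hGj : G j = Real.exp (-U j) := by
      rw [hG j, Real.sign_of_pos (by linarith : (0:ℝ) < U0 j - U j), one_mul,
        max_eq_left (Real.exp_le_exp.mpr (by linarith))]
    rw [hGj, abs_of_pos (Real.exp_pos _), min_eq_left h.le]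
  · have hGj : G j = -Real.exp (-U0 j) := by
      rw [hG j, Real.sign_of_neg (by linarith : U0 j - U j < 0), neg_one_mul,
        max_eq_right (Real.exp_le_exp.mpr (by linarith))]
    rw [hGj, abs_neg, abs_of_pos (Real.exp_pos _), min_eq_right h.le]

lemma PQ_lemma {m : ℕ} (α : ℝ) (U U0 G : Fin m → ℝ) (hne : ∀ i, U i ≠ U0 i)
    (hG : ∀ i, G i = Real.sign (U0 i - U i) * max (Real.exp (-U i)) (Real.exp (-U0 i)))
    (l : ℝ) : mirrorP m α G (Real.exp (-l)) ↔ mirrorQ m α U U0 l := by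
  unfold mirrorP mirrorQ
  have h1 : (Finset.univ.filter fun j => G j ≤ -Real.exp (-l))
      = (Finset.univ.filter fun j => U0 j ≤ min (U j) l) := by
    ext j
    simp only [Finset.mem_filter, Finset.mem_univ, true_and]
    exact (corr_lemma U U0 G hne hG l j).1
  have h2 : (Finset.univ.filter fun j => Real.exp (-l) ≤ G j)
      = (Finset.univ.filter fun j => U j ≤ min (U0 j) l) := by
    ext j
    simp only [Finset.mem_filter, Finset.mem_univ, true_and]
    exact (corr_lemma U U0 G hne hG l j).2
  rw [h1, h2]

lemma Q_congr {m : ℕ} (α : ℝ) (U U0 : Fin m → ℝ) (l1 l2 : ℝ)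
    (h : ∀ j, min (U j) (U0 j) ≤ l1 ↔ min (U j) (U0 j) ≤ l2) :
    mirrorQ m α U U0 l1 ↔ mirrorQ m α U U0 l2 := by
  have key : ∀ (a b : ℝ), (min a b ≤ l1 ↔ min a b ≤ l2) → (b ≤ min a l1 ↔ b ≤ min a l2) := by
    intro a b hab
    constructor
    · intro hb
      have h1 : b ≤ a := hb.trans (min_le_left _ _)
      have h2 : b ≤ l1 := hb.trans (min_le_right _ _)
      have h3 : min a b ≤ l2 := hab.mp (by rw [min_eq_right h1]; exact h2)
      rw [min_eq_right h1] at h3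
      exact le_min h1 h3
    · intro hb
      have h1 : b ≤ a := hb.trans (min_le_left _ _)
      have h2 : b ≤ l2 := hb.trans (min_le_right _ _)
      have h3 : min a b ≤ l1 := hab.mpr (by rw [min_eq_right h1]; exact h2)
      rw [min_eq_right h1] at h3
      exact le_min h1 h3
  unfold mirrorQ
  have h1 : (Finset.univ.filter fun j => U0 j ≤ min (U j) l1)
      = (Finset.univ.filter fun j => U0 j ≤ min (U j) l2) := by
    ext j
    simp only [Finset.mem_filter, Finset.mem_univ, true_and]
    exact key (U j) (U0 j) (h j)
  have h2 : (Finset.univ.filter fun j => U j ≤ min (U0 j) l1)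
      = (Finset.univ.filter fun j => U j ≤ min (U0 j) l2) := by
    ext j
    simp only [Finset.mem_filter, Finset.mem_univ, true_and]
    exact key (U0 j) (U j) (by rw [min_comm]; exact h j)
  rw [h1, h2]

lemma exists_min_witness {m : ℕ} (α : ℝ) (hα1 : α < 1) (U U0 : Fin m → ℝ)
    (l : ℝ) (hQ : mirrorQ m α U U0 l) :
    ∃ k : Fin m, min (U k) (U0 k) ≤ l ∧ mirrorQ m α U U0 (min (U k) (U0 k)) ∧
      ∀ j, min (U j) (U0 j) ≤ l → min (U j) (U0 j) ≤ min (U k) (U0 k) := by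
  by_cases hF : (Finset.univ.filter fun j => min (U j) (U0 j) ≤ l).Nonempty
  · obtain ⟨k, hk, hmax⟩ := Finset.exists_max_image _ (fun j => min (U j) (U0 j)) hF
    have hkl : min (U k) (U0 k) ≤ l := (Finset.mem_filter.mp hk).2
    have hall : ∀ j, min (U j) (U0 j) ≤ l → min (U j) (U0 j) ≤ min (U k) (U0 k) := by
      intro j hj
      exact hmax j (Finset.mem_filter.mpr ⟨Finset.mem_univ _, hj⟩)
    refine ⟨k, hkl, ?_, hall⟩
    exact (Q_congr α U U0 l (min (U k) (U0 k))
      (fun j => ⟨fun hj => hall j hj, fun hj => hj.trans hkl⟩)).mp hQ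
  · exfalso
    have h1 : (Finset.univ.filter fun j => U0 j ≤ min (U j) l) = ∅ := by
      apply Finset.filter_eq_empty_iff.mpr
      intro j _ hj
      exact hF ⟨j, Finset.mem_filter.mpr ⟨Finset.mem_univ _,
        (min_le_right _ _).trans (hj.trans (min_le_right _ _))⟩⟩
    have h2 : (Finset.univ.filter fun j => U j ≤ min (U0 j) l) = ∅ := by
      apply Finset.filter_eq_empty_iff.mpr
      intro j _ hj
      exact hF ⟨j, Finset.mem_filter.mpr ⟨Finset.mem_univ _,
        (min_le_left _ _).trans (hj.trans (min_le_right _ _))⟩⟩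
    unfold mirrorQ at hQ
    rw [h1, h2] at hQ
    norm_num at hQ
    linarith

/-- **Equivalence of the mirror thresholding rule and score thresholding (Lemma A.1).**
For strictly positive scores with no ties, the mirror rule `G i ≥ τ` coincides with the
score-thresholding rule `U i ≤ min (U⁰ i) τ'`. The thresholds `τ` and `τ'` live in the
extended reals (`τ = +∞` and `τ' = −∞` when the respective defining sets are empty). -/
theorem mirror_rule_equals_score_thresholding
    (m : ℕ) (hm : 1 ≤ m) (α : ℝ) (hα : α ∈ Set.Ioo (0 : ℝ) 1)
    (U U0 : Fin m → ℝ)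
    (hU : ∀ i, 0 < U i) (hU0 : ∀ i, 0 < U0 i) (hne : ∀ i, U i ≠ U0 i)
    (G : Fin m → ℝ)
    (hG : ∀ i, G i = Real.sign (U0 i - U i) * max (Real.exp (-U i)) (Real.exp (-U0 i)))
    (τ τ' : EReal)
    (hτ : τ = sInf ((fun x : ℝ => (x : EReal)) ''
      {x : ℝ | (∃ i, |G i| = x) ∧
        ((1 : ℝ) + ((Finset.univ.filter fun j => G j ≤ -x).card : ℝ)) /
          max ((Finset.univ.filter fun j => x ≤ G j).card : ℝ) 1 ≤ α}))
    (hτ' : τ' = sSup ((fun x : ℝ => (x : EReal)) ''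
      {x : ℝ | (∃ i, U i = x ∨ U0 i = x) ∧
        ((1 : ℝ) + ((Finset.univ.filter fun j => U0 j ≤ min (U j) x).card : ℝ)) /
          max ((Finset.univ.filter fun j => U j ≤ min (U0 j) x).card : ℝ) 1 ≤ α})) :
    (∀ i, (τ ≤ (G i : EReal)) ↔ (U i ≤ U0 i ∧ (U i : EReal) ≤ τ')) ∧
    {i : Fin m | τ ≤ (G i : EReal)}
      = {i : Fin m | U i ≤ U0 i ∧ (U i : EReal) ≤ τ'} := by
  have hα1 : α < 1 := hα.2
  have habs : ∀ j, |G j| = Real.exp (-(min (U j) (U0 j))) := abs_lemma U U0 G hne hG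
  have hPQ : ∀ l, mirrorP m α G (Real.exp (-l)) ↔ mirrorQ m α U U0 l :=
    PQ_lemma α U U0 G hne hG
  have hτ2 : τ = sInf ((fun x : ℝ => (x : EReal)) ''
      {x : ℝ | (∃ i, |G i| = x) ∧ mirrorP m α G x}) := hτ
  have hτ'2 : τ' = sSup ((fun x : ℝ => (x : EReal)) ''
      {x : ℝ | (∃ i, U i = x ∨ U0 i = x) ∧ mirrorQ m α U U0 x}) := hτ'
  suffices hmain : ∀ i, (τ ≤ (G i : EReal)) ↔ (U i ≤ U0 i ∧ (U i : EReal) ≤ τ') by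
    exact ⟨hmain, Set.ext fun i => hmain i⟩
  by_cases hSU : ∃ x : ℝ, (∃ i, U i = x ∨ U0 i = x) ∧ mirrorQ m α U U0 x
  · -- nonempty case
    obtain ⟨l0, hl0cand, hl0Q⟩ := hSU
    obtain ⟨k1, _, hk1Q, _⟩ := exists_min_witness α hα1 U U0 l0 hl0Q
    have hSm : (Finset.univ.filter fun j => mirrorQ m α U U0 (min (U j) (U0 j))).Nonempty :=
      ⟨k1, Finset.mem_filter.mpr ⟨Finset.mem_univ _, hk1Q⟩⟩
    obtain ⟨k0, hk0mem, hk0max⟩ :=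
      Finset.exists_max_image _ (fun j => min (U j) (U0 j)) hSm
    set μ := min (U k0) (U0 k0) with hμ
    have hQμ : mirrorQ m α U U0 μ := (Finset.mem_filter.mp hk0mem).2
    have hμmax : ∀ j, mirrorQ m α U U0 (min (U j) (U0 j)) → min (U j) (U0 j) ≤ μ :=
      fun j hj => hk0max j (Finset.mem_filter.mpr ⟨Finset.mem_univ _, hj⟩)
    have hτval : τ = ((Real.exp (-μ) : ℝ) : EReal) := by
      rw [hτ2]
      apply le_antisymm
      · exact sInf_le ⟨Real.exp (-μ), ⟨⟨k0, habs k0⟩, (hPQ μ).mpr hQμ⟩, rfl⟩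
      · apply le_sInf
        rintro b ⟨x, ⟨⟨i, hi⟩, hPx⟩, rfl⟩
        have hx : x = Real.exp (-(min (U i) (U0 i))) := by rw [← hi, habs i]
        rw [hx] at hPx
        have hQi : mirrorQ m α U U0 (min (U i) (U0 i)) := (hPQ _).mp hPx
        have hle : min (U i) (U0 i) ≤ μ := hμmax i hQi
        rw [hx]
        exact EReal.coe_le_coe_iff.mpr (Real.exp_le_exp.mpr (by linarith))
    set SUf : Finset ℝ :=
      ((Finset.univ.image U) ∪ (Finset.univ.image U0)).filter (mirrorQ m α U U0) with hSUfdef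
    have hSUfmem : ∀ x : ℝ, x ∈ SUf ↔ (∃ i, U i = x ∨ U0 i = x) ∧ mirrorQ m α U U0 x := by
      intro x
      simp only [hSUfdef, Finset.mem_filter, Finset.mem_union, Finset.mem_image,
        Finset.mem_univ, true_and]
      constructor
      · rintro ⟨h1 | h1, h2⟩ <;> obtain ⟨i, hi⟩ := h1
        · exact ⟨⟨i, Or.inl hi⟩, h2⟩
        · exact ⟨⟨i, Or.inr hi⟩, h2⟩
      · rintro ⟨⟨i, hi | hi⟩, h2⟩
        · exact ⟨Or.inl ⟨i, hi⟩, h2⟩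
        · exact ⟨Or.inr ⟨i, hi⟩, h2⟩
    have hSUfne : SUf.Nonempty := ⟨l0, (hSUfmem l0).mpr ⟨hl0cand, hl0Q⟩⟩
    set ν := SUf.max' hSUfne with hν
    have hνQ : mirrorQ m α U U0 ν := ((hSUfmem ν).mp (SUf.max'_mem hSUfne)).2
    have hτ'val : τ' = ((ν : ℝ) : EReal) := by
      rw [hτ'2]
      apply le_antisymm
      · apply sSup_le
        rintro b ⟨x, hx, rfl⟩
        exact EReal.coe_le_coe_iff.mpr (SUf.le_max' x ((hSUfmem x).mpr hx))
      · exact le_sSup ⟨ν, (hSUfmem ν).mp (SUf.max'_mem hSUfne), rfl⟩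
    have hμν : μ ≤ ν := by
      apply SUf.le_max'
      apply (hSUfmem μ).mpr
      exact ⟨⟨k0, (min_choice (U k0) (U0 k0)).imp Eq.symm Eq.symm⟩, hQμ⟩
    have hbound : ∀ i : Fin m, min (U i) (U0 i) ≤ ν → min (U i) (U0 i) ≤ μ := by
      intro i hi
      obtain ⟨k, hkl, hkQ, hkall⟩ := exists_min_witness α hα1 U U0 ν hνQ
      exact (hkall i hi).trans (hμmax k hkQ)
    intro i
    rw [hτval, hτ'val, EReal.coe_le_coe_iff, EReal.coe_le_coe_iff,
      (corr_lemma U U0 G hne hG μ i).2, le_min_iff]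
    constructor
    · rintro ⟨h1, h2⟩
      exact ⟨h1, h2.trans hμν⟩
    · rintro ⟨h1, h2⟩
      refine ⟨h1, ?_⟩
      have hmi : min (U i) (U0 i) = U i := min_eq_left h1
      have := hbound i (by rw [hmi]; exact h2)
      rwa [hmi] at this
  · -- empty case
    have hQempty : {x : ℝ | (∃ i, U i = x ∨ U0 i = x) ∧ mirrorQ m α U U0 x} = ∅ := by
      apply Set.eq_empty_iff_forall_notMem.mpr
      intro x hx
      exact hSU ⟨x, hx⟩
    have hPempty : {x : ℝ | (∃ i, |G i| = x) ∧ mirrorP m α G x} = ∅ := by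
      apply Set.eq_empty_iff_forall_notMem.mpr
      rintro x ⟨⟨i, hi⟩, hPx⟩
      have hx : x = Real.exp (-(min (U i) (U0 i))) := by rw [← hi, habs i]
      rw [hx] at hPx
      exact hSU ⟨min (U i) (U0 i),
        ⟨i, (min_choice (U i) (U0 i)).imp Eq.symm Eq.symm⟩, (hPQ _).mp hPx⟩
    have hτtop : τ = ⊤ := by rw [hτ2, hPempty, Set.image_empty, sInf_empty]
    have hτ'bot : τ' = ⊥ := by rw [hτ'2, hQempty, Set.image_empty, sSup_empty]
    intro i
    constructor
    · intro h
      rw [hτtop] at h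
      exact absurd (top_le_iff.mp h) (EReal.coe_ne_top _)
    · rintro ⟨_, h⟩
      rw [hτ'bot] at h
      exact absurd (le_bot_iff.mp h) (EReal.coe_ne_bot _)
end

section
/- FDR bound for the e-BH procedure with generalized e-values. Let (Ω, 𝓕, ℙ) be a probability space, m ≥ 1, H₀ ⊆ [m], α ∈ (0,1), and let e_1,…,e_m be nonnegative integrable random variables. Let e_{(1)} ≥ ⋯ ≥ e_{(m)} be the nonincreasing rearrangement of (e_1,…,e_m), k̂ = max{ i ∈ [m] : i·e_{(i)}/m ≥ 1/α }, and R_ebh = { i : e_i ≥ e_{(k̂)} } (with R_ebh = ∅ when the defining set for k̂ is empty). Then the false discovery rate of R_ebh satisfies FDR := E[ |R_ebh ∩ H₀| / max(|R_ebh|, 1) ] ≤ (α/m) · E[ Σ_{i∈H₀} e_i ]. In particular, if E[ Σ_{i∈H₀} e_i ] ≤ m (i.e., the e_i are generalized e-values), then FDR ≤ α. -/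
open MeasureTheory
open scoped Classical

/-- The nonincreasing rearrangement `e_(1) ≥ ⋯ ≥ e_(m)` of a tuple (via `Tuple.sort`,
which sorts nondecreasingly, composed with index reversal). -/
noncomputable def sortedDesc {m : ℕ} (e : Fin m → ℝ) (i : Fin m) : ℝ :=
  e (Tuple.sort e i.rev)

/-- The e-BH procedure at level `α`: with `e_(1) ≥ ⋯ ≥ e_(m)` the nonincreasing
rearrangement and `k̂ = max{ i : i·e_(i)/m ≥ 1/α }`, reject `{ i : e i ≥ e_(k̂) }`
(and reject nothing when no such `k̂` exists). -/
noncomputable def ebh {m : ℕ} (α : ℝ) (e : Fin m → ℝ) : Finset (Fin m) :=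
  if h : (Finset.univ.filter fun k : Fin m =>
      1 / α ≤ (((k : ℕ) : ℝ) + 1) * sortedDesc e k / m).Nonempty then
    Finset.univ.filter fun i =>
      sortedDesc e ((Finset.univ.filter fun k : Fin m =>
        1 / α ≤ (((k : ℕ) : ℝ) + 1) * sortedDesc e k / m).max' h) ≤ e i
  else ∅

lemma ebh_pointwise {m : ℕ} (hm : 1 ≤ m) (α : ℝ) (hα : 0 < α)
    (e : Fin m → ℝ) (hnn : ∀ i, 0 ≤ e i) (H0 : Finset (Fin m)) :
    ((ebh α e ∩ H0).card : ℝ) / max ((ebh α e).card : ℝ) 1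
      ≤ (α / m) * ∑ i ∈ H0, e i := by
  have hm0 : (0:ℝ) < m := by exact_mod_cast hm
  have hrhs0 : 0 ≤ (α / m) * ∑ i ∈ H0, e i :=
    mul_nonneg (div_nonneg hα.le hm0.le) (Finset.sum_nonneg fun i _ => hnn i)
  unfold ebh
  split_ifs with h
  · set F := Finset.univ.filter fun k : Fin m =>
      1 / α ≤ (((k : ℕ) : ℝ) + 1) * sortedDesc e k / m with hF
    set k := F.max' h with hk
    have hkmem : k ∈ F := F.max'_mem h
    have hkin : 1 / α ≤ (((k : ℕ) : ℝ) + 1) * sortedDesc e k / m := by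
      simpa [hF] using (Finset.mem_filter.mp hkmem).2
    set R := Finset.univ.filter fun i => sortedDesc e k ≤ e i with hR
    -- sortedDesc e k > 0
    have hs0 : 0 < sortedDesc e k := by
      by_contra hc
      push_neg at hc
      have : (((k : ℕ) : ℝ) + 1) * sortedDesc e k / m ≤ 0 := by
        apply div_nonpos_of_nonpos_of_nonneg _ hm0.le
        exact mul_nonpos_of_nonneg_of_nonpos (by positivity) hc
      have := le_trans hkin this
      have : (0:ℝ) < 1 / α := by positivity
      linarith
    -- |R| ≥ k+1
    have hcard : (k : ℕ) + 1 ≤ R.card := by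
      have hsub : ((Finset.univ.filter fun j : Fin m => j ≤ k).image
          fun j => Tuple.sort e j.rev) ⊆ R := by
        intro x hx
        simp only [Finset.mem_image, Finset.mem_filter, Finset.mem_univ, true_and] at hx
        obtain ⟨j, hj, rfl⟩ := hx
        simp only [hR, Finset.mem_filter, Finset.mem_univ, true_and]
        have : k.rev ≤ j.rev := Fin.rev_le_rev.mpr hj
        exact Tuple.monotone_sort e this
      have hinj : ((Finset.univ.filter fun j : Fin m => j ≤ k).image
          fun j => Tuple.sort e j.rev).card
          = (Finset.univ.filter fun j : Fin m => j ≤ k).card := by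
        apply Finset.card_image_of_injective
        intro a b hab
        exact Fin.rev_injective ((Tuple.sort e).injective hab)
      have hiic : (Finset.univ.filter fun j : Fin m => j ≤ k).card = (k : ℕ) + 1 := by
        have : (Finset.univ.filter fun j : Fin m => j ≤ k) = Finset.Iic k := by
          ext j; simp
        rw [this, Fin.card_Iic]
      calc (k : ℕ) + 1 = _ := (hiic ▸ hinj).symm
        _ ≤ R.card := Finset.card_le_card hsub
    have hR1 : 1 ≤ R.card := le_trans (Nat.le_add_left 1 _) hcard
    have hmax : max ((R.card : ℝ)) 1 = R.card := by
      apply max_eq_left; exact_mod_cast hR1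
    rw [hmax]
    have hRpos : (0:ℝ) < R.card := by exact_mod_cast hR1
    -- per-element bound
    have key : ∀ i ∈ R, 1 / (R.card : ℝ) ≤ α * e i / m := by
      intro i hi
      have hie : sortedDesc e k ≤ e i := by
        simpa [hR] using (Finset.mem_filter.mp hi).2
      have h1 : 1 / (R.card : ℝ) ≤ 1 / (((k : ℕ) : ℝ) + 1) := by
        apply one_div_le_one_div_of_le (by positivity)
        exact_mod_cast hcard
      have hkin' : (m : ℝ) ≤ α * ((((k : ℕ) : ℝ) + 1) * sortedDesc e k) := by
        rw [div_le_div_iff₀ hα hm0, one_mul] at hkin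
        nlinarith [hkin]
      have h2 : 1 / (((k : ℕ) : ℝ) + 1) ≤ α * sortedDesc e k / m := by
        rw [div_le_div_iff₀ (by positivity) hm0]
        nlinarith [hkin']
      have h3 : α * sortedDesc e k / m ≤ α * e i / m := by
        gcongr
      linarith
    calc ((R ∩ H0).card : ℝ) / (R.card : ℝ)
        = ∑ _i ∈ R ∩ H0, 1 / (R.card : ℝ) := by
          rw [Finset.sum_const]; push_cast; ring
      _ ≤ ∑ i ∈ R ∩ H0, α * e i / m := by
          apply Finset.sum_le_sum
          intro i hi
          exact key i (Finset.mem_of_mem_inter_left hi)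
      _ ≤ ∑ i ∈ H0, α * e i / m := by
          apply Finset.sum_le_sum_of_subset_of_nonneg (Finset.inter_subset_right)
          intro i _ _
          exact div_nonneg (mul_nonneg hα.le (hnn i)) hm0.le
      _ = (α / m) * ∑ i ∈ H0, e i := by
          rw [Finset.mul_sum]; apply Finset.sum_congr rfl; intro i _; ring
  · simpa using hrhs0


/-- **FDR bound for the e-BH procedure with generalized e-values.**
For nonnegative integrable e-values, the FDR of the e-BH rejection set at level `α` is
at most `(α/m)·E[Σ_{i∈H₀} e i]`; in particular, if `E[Σ_{i∈H₀} e i] ≤ m` (generalized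
e-values) then the FDR is at most `α`. -/
theorem ebh_fdr_bound
    {Ω : Type*} [MeasurableSpace Ω] (P : Measure Ω) [IsProbabilityMeasure P]
    (m : ℕ) (hm : 1 ≤ m) (H0 : Finset (Fin m)) (α : ℝ) (hα : α ∈ Set.Ioo (0 : ℝ) 1)
    (e : Fin m → Ω → ℝ)
    (hnn : ∀ i ω, 0 ≤ e i ω) (hint : ∀ i, Integrable (e i) P)
    (hmeas : ∀ i, Measurable (e i)) :
    (∫ ω, (((ebh α (fun i => e i ω)) ∩ H0).card : ℝ) /
        max (((ebh α (fun i => e i ω)).card : ℝ)) 1 ∂P)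
      ≤ (α / m) * ∫ ω, ∑ i ∈ H0, e i ω ∂P ∧
    ((∫ ω, ∑ i ∈ H0, e i ω ∂P) ≤ m →
      (∫ ω, (((ebh α (fun i => e i ω)) ∩ H0).card : ℝ) /
          max (((ebh α (fun i => e i ω)).card : ℝ)) 1 ∂P) ≤ α) := by
  have hm0 : (0:ℝ) < m := by exact_mod_cast hm
  have hgint : Integrable (fun ω => ∑ i ∈ H0, e i ω) P :=
    integrable_finset_sum _ fun i _ => hint i
  have hmain : (∫ ω, (((ebh α (fun i => e i ω)) ∩ H0).card : ℝ) /
        max (((ebh α (fun i => e i ω)).card : ℝ)) 1 ∂P)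
      ≤ (α / m) * ∫ ω, ∑ i ∈ H0, e i ω ∂P := by
    rw [← integral_const_mul]
    apply integral_mono_of_nonneg
    · filter_upwards with ω
      positivity
    · exact hgint.const_mul _
    · filter_upwards with ω
      exact ebh_pointwise hm α hα.1 (fun i => e i ω) (fun i => hnn i ω) H0
  refine ⟨hmain, fun hI => le_trans hmain ?_⟩
  calc (α / m) * ∫ ω, ∑ i ∈ H0, e i ω ∂P ≤ (α / m) * m :=
        mul_le_mul_of_nonneg_left hI (div_nonneg hα.1.le hm0.le)
    _ = α := by field_simp
end

section
/- Bound on the total null e-value mass under approximate pairwise exchangeability (Theorem 3, part (a)). Let (Ω, 𝓕, ℙ) be a probability space, m ≥ 1, H₀ ⊆ [m], α ∈ (0,1). Let G_1,…,G_m be real random variables, τ = inf{ λ ∈ {|G_1|,…,|G_m|} : (1 + Σ_j 1{G_j ≤ −λ}) / max(Σ_j 1{G_j ≥ λ}, 1) ≤ α } (τ = +∞ if the set is empty), and e_i = m·1{G_i ≥ τ}/(1 + Σ_j 1{G_j ≤ −τ}) with e_i = 0 when τ = +∞. Let (K̂L_i)_{i∈H₀} be real random variables (the observed KL divergences). Assume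 that for every i ∈ H₀ and every ε ≥ 0, almost surely E[ 1{G_i > 0, K̂L_i ≤ ε} | 𝓖_i ] ≤ e^ε · E[ 1{G_i < 0} | 𝓖_i ], where 𝓖_i is the σ-algebra generated by |G_i| and (G_j)_{j≠i}. Then E[ Σ_{i∈H₀} e_i ] ≤ inf_{ε ≥ 0} m·[ e^ε + Σ_{i∈H₀} ℙ( K̂L_i > ε ) ]. -/
open MeasureTheory
open scoped Classical

/-- The mirror threshold `τ`: the infimum (in the extended reals, `+∞` when the set is
empty) of the values `λ ∈ {|G 1|, …, |G m|}` at which the mirror FDP estimate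
`(1 + #{j : G j ≤ −λ}) / max(#{j : G j ≥ λ}, 1)` is at most `α`. -/
noncomputable def mirrorThreshold {m : ℕ} (α : ℝ) (G : Fin m → ℝ) : EReal :=
  sInf ((fun x : ℝ => (x : EReal)) ''
    {x : ℝ | (∃ i, |G i| = x) ∧
      ((1 : ℝ) + ((Finset.univ.filter fun j => G j ≤ -x).card : ℝ)) /
        max ((Finset.univ.filter fun j => x ≤ G j).card : ℝ) 1 ≤ α})

/-- The mirror e-values `e i = m·1{G i ≥ τ}/(1 + #{j : G j ≤ −τ})`; when `τ = +∞` the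
indicator vanishes, so `e i = 0`. -/
noncomputable def mirrorEValue {m : ℕ} (α : ℝ) (G : Fin m → ℝ) (i : Fin m) : ℝ :=
  (m : ℝ) * (if mirrorThreshold α G ≤ (G i : EReal) then (1 : ℝ) else 0) /
    ((1 : ℝ) + ((Finset.univ.filter fun j =>
        (G j : EReal) ≤ -(mirrorThreshold α G)).card : ℝ))

/-- The σ-algebra generated by `|G i|` and `(G j)_{j ≠ i}`. -/
def sigmaG {Ω : Type*} [MeasurableSpace Ω] {m : ℕ} (G : Fin m → Ω → ℝ) (i : Fin m) :
    MeasurableSpace Ω :=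
  MeasurableSpace.comap
    (fun ω => (|G i ω|, fun j : {j : Fin m // j ≠ i} => G j.1 ω)) inferInstance

/-!
Let `A i g := mirrorWeight α (flipAbs i g) i` be the weight of coordinate `i` once `g i` is
replaced by `|g i|`. It depends only on `|g i|` and `(g j)_{j ≠ i}`, so `A i G` is
`𝓖_i`-measurable, and `e_i = m · A i G · 1{G i ≥ 0}`. Against this weight the conditional
hypothesis turns `1{G i > 0, K̂L_i ≤ ε}` into `e^ε · 1{G i < 0}` in expectation, up to
`ℙ(K̂L_i > ε)`. Deterministically `∑ i, A i g · 1{g i ≤ 0} ≤ 1`: the threshold is antitone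
in `g` and invariant under permutations, so for non-positive coordinates `i`, `k` with
`A i g, A k g > 0` the threshold of `flipAbs i g` is at most `|g k|`; hence if there are `n`
such coordinates, each has `A i g ≤ 1 / n`.
-/

namespace Mirror

variable {m : ℕ}

noncomputable def fdpEstimate (g : Fin m → ℝ) (x : ℝ) : ℝ :=
  ((1 : ℝ) + ((Finset.univ.filter fun j => g j ≤ -x).card : ℝ)) /
    max ((Finset.univ.filter fun j => x ≤ g j).card : ℝ) 1

def thresholdCandidates (α : ℝ) (g : Fin m → ℝ) : Set ℝ :=
  {x | (∃ i, |g i| = x) ∧ fdpEstimate g x ≤ α}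

lemma mirrorThreshold_eq_sInf (α : ℝ) (g : Fin m → ℝ) :
    mirrorThreshold α g = sInf ((↑) '' thresholdCandidates α g) := rfl

lemma nonneg_of_mem_thresholdCandidates {α : ℝ} {g : Fin m → ℝ} {x : ℝ}
    (hx : x ∈ thresholdCandidates α g) : 0 ≤ x := by
  obtain ⟨⟨i, rfl⟩, -⟩ := hx
  exact abs_nonneg _

lemma mirrorThreshold_nonneg (α : ℝ) (g : Fin m → ℝ) : 0 ≤ mirrorThreshold α g :=
  le_sInf <| by
    rintro _ ⟨x, hx, rfl⟩
    exact EReal.coe_nonneg.2 (nonneg_of_mem_thresholdCandidates hx)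

lemma fdpEstimate_anti {g g' : Fin m → ℝ} (h : g ≤ g') (x : ℝ) :
    fdpEstimate g' x ≤ fdpEstimate g x := by
  unfold fdpEstimate
  gcongr <;> exact h _

lemma card_filter_comp_perm {ι : Type*} [Fintype ι] (σ : Equiv.Perm ι) (p : ι → Prop)
    [DecidablePred p] :
    (Finset.univ.filter fun j => p (σ j)).card = (Finset.univ.filter p).card := by
  simp only [Finset.card_filter]
  exact Equiv.sum_comp σ fun j => if p j then 1 else 0

lemma fdpEstimate_comp_perm (σ : Equiv.Perm (Fin m)) (g : Fin m → ℝ) (x : ℝ) :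
    fdpEstimate (g ∘ σ) x = fdpEstimate g x := by
  simp only [fdpEstimate, Function.comp_apply, card_filter_comp_perm σ (fun y => g y ≤ -x),
    card_filter_comp_perm σ (fun y => x ≤ g y)]

lemma mirrorThreshold_comp_perm (α : ℝ) (σ : Equiv.Perm (Fin m)) (g : Fin m → ℝ) :
    mirrorThreshold α (g ∘ σ) = mirrorThreshold α g := by
  simp only [mirrorThreshold_eq_sInf, thresholdCandidates, fdpEstimate_comp_perm]
  congr 3; ext x
  rw [σ.surjective.exists (p := fun i => |g i| = x)]
  rfl

lemma mirrorThreshold_anti {α : ℝ} {g g' : Fin m → ℝ} (h : g ≤ g')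
    (habs : ∀ i, ∃ j, |g' j| = |g i|) : mirrorThreshold α g' ≤ mirrorThreshold α g := by
  refine sInf_le_sInf (Set.image_mono ?_)
  rintro x ⟨⟨i, rfl⟩, hx⟩
  obtain ⟨j, hj⟩ := habs i
  exact ⟨⟨j, hj⟩, (fdpEstimate_anti h _).trans hx⟩

noncomputable def flipAbs (i : Fin m) (g : Fin m → ℝ) : Fin m → ℝ :=
  Function.update g i |g i|

@[simp] lemma flipAbs_apply_self (i : Fin m) (g : Fin m → ℝ) : flipAbs i g i = |g i| :=
  Function.update_self _ _ _

@[simp] lemma flipAbs_apply_of_ne {i j : Fin m} (g : Fin m → ℝ) (h : j ≠ i) :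
    flipAbs i g j = g j :=
  Function.update_of_ne h _ _

@[simp] lemma abs_flipAbs (i j : Fin m) (g : Fin m → ℝ) : |flipAbs i g j| = |g j| := by
  rcases eq_or_ne j i with rfl | h <;> simp [*]

lemma flipAbs_of_nonneg {i : Fin m} {g : Fin m → ℝ} (h : 0 ≤ g i) : flipAbs i g = g := by
  rw [flipAbs, abs_of_nonneg h, Function.update_eq_self]

/-- After swapping `i` and `k`, `flipAbs k g` lies pointwise below `flipAbs i g` and has the
same absolute values. -/
lemma mirrorThreshold_flipAbs_le {α : ℝ} {g : Fin m → ℝ} {i k : Fin m} (hi : g i ≤ 0)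
    (hk : g k ≤ 0) (hki : |g k| ≤ |g i|) :
    mirrorThreshold α (flipAbs i g) ≤ mirrorThreshold α (flipAbs k g) := by
  conv_rhs => rw [← mirrorThreshold_comp_perm α (Equiv.swap i k)]
  refine mirrorThreshold_anti (fun j => ?_) fun j => ⟨Equiv.swap i k j, by simp⟩
  rcases eq_or_ne j i with rfl | hji
  · simpa using hki
  rcases eq_or_ne j k with rfl | hjk
  · simp only [Function.comp_apply, Equiv.swap_apply_right, flipAbs_apply_of_ne g hji,
      flipAbs_apply_of_ne g hji.symm]
    rw [abs_of_nonpos hi, abs_of_nonpos hk] at hki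
    linarith
  · simp [hji, hjk, Equiv.swap_apply_of_ne_of_ne hji hjk]

lemma mirrorThreshold_flipAbs_le_abs {α : ℝ} {g : Fin m → ℝ} {i k : Fin m} (hi : g i ≤ 0)
    (hk : g k ≤ 0) (hτi : mirrorThreshold α (flipAbs i g) ≤ ((|g i| : ℝ) : EReal))
    (hτk : mirrorThreshold α (flipAbs k g) ≤ ((|g k| : ℝ) : EReal)) :
    mirrorThreshold α (flipAbs i g) ≤ ((|g k| : ℝ) : EReal) := by
  rcases le_total |g k| |g i| with hki | hik
  · exact (mirrorThreshold_flipAbs_le hi hk hki).trans hτk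
  · exact hτi.trans (EReal.coe_le_coe_iff.2 hik)

noncomputable def negativeCount (α : ℝ) (g : Fin m → ℝ) : ℕ :=
  (Finset.univ.filter fun j => (g j : EReal) ≤ -(mirrorThreshold α g)).card

noncomputable def mirrorWeight (α : ℝ) (g : Fin m → ℝ) (i : Fin m) : ℝ :=
  (if mirrorThreshold α g ≤ (g i : EReal) then (1 : ℝ) else 0) / (1 + (negativeCount α g : ℝ))

lemma mirrorEValue_eq_mul_mirrorWeight (α : ℝ) (g : Fin m → ℝ) (i : Fin m) :
    mirrorEValue α g i = m * mirrorWeight α g i :=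
  mul_div_assoc _ _ _

lemma mirrorWeight_nonneg (α : ℝ) (g : Fin m → ℝ) (i : Fin m) : 0 ≤ mirrorWeight α g i := by
  unfold mirrorWeight; positivity

lemma mirrorWeight_le_one_div {α : ℝ} {g : Fin m → ℝ} (i : Fin m) {n : ℕ} (hn : 0 < n)
    (h : n ≤ 1 + negativeCount α g) : mirrorWeight α g i ≤ 1 / n := by
  unfold mirrorWeight
  gcongr
  · split_ifs <;> norm_num
  · exact_mod_cast h

lemma mirrorWeight_le_one (α : ℝ) (g : Fin m → ℝ) (i : Fin m) : mirrorWeight α g i ≤ 1 := by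
  simpa using mirrorWeight_le_one_div i one_pos (Nat.le_add_right 1 (negativeCount α g))

lemma mirrorWeight_eq_zero {α : ℝ} {g : Fin m → ℝ} {i : Fin m}
    (h : (g i : EReal) < mirrorThreshold α g) : mirrorWeight α g i = 0 := by
  rw [mirrorWeight, if_neg h.not_ge, zero_div]

lemma mirrorEValue_eq_mirrorWeight_flipAbs (α : ℝ) (g : Fin m → ℝ) (i : Fin m) :
    mirrorEValue α g i = m * (mirrorWeight α (flipAbs i g) i * if 0 ≤ g i then 1 else 0) := by
  rw [mirrorEValue_eq_mul_mirrorWeight]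
  split_ifs with hi
  · rw [flipAbs_of_nonneg hi, mul_one]
  · have hneg : (g i : EReal) < mirrorThreshold α g :=
      (EReal.coe_lt_coe_iff.2 (not_le.1 hi)).trans_le (mirrorThreshold_nonneg α g)
    rw [mirrorWeight_eq_zero hneg, mul_zero, mul_zero, mul_zero]

noncomputable def flipSurvivors (α : ℝ) (g : Fin m → ℝ) : Finset (Fin m) :=
  Finset.univ.filter fun i => g i ≤ 0 ∧ mirrorThreshold α (flipAbs i g) ≤ ((|g i| : ℝ) : EReal)

/-- Any two survivors `i ≠ k` satisfy `τ(flipAbs i g) ≤ |g k| = -g k`, so `k` is counted in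
`negativeCount α (flipAbs i g)`. -/
lemma mirrorWeight_flipAbs_le_one_div_card {α : ℝ} {g : Fin m → ℝ} {i : Fin m}
    (hiT : i ∈ flipSurvivors α g) :
    mirrorWeight α (flipAbs i g) i ≤ 1 / (flipSurvivors α g).card := by
  obtain ⟨hi, hτi⟩ := (Finset.mem_filter.1 hiT).2
  refine mirrorWeight_le_one_div i (Finset.card_pos.2 ⟨i, hiT⟩) ?_
  have hsub : (flipSurvivors α g).erase i ⊆ Finset.univ.filter fun j =>
      (flipAbs i g j : EReal) ≤ -(mirrorThreshold α (flipAbs i g)) := by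
    intro k hk
    obtain ⟨hki, hkT⟩ := Finset.mem_erase.1 hk
    obtain ⟨hk, hτk⟩ := (Finset.mem_filter.1 hkT).2
    rw [Finset.mem_filter, flipAbs_apply_of_ne g hki, ← neg_neg (g k), ← abs_of_nonpos hk]
    exact ⟨Finset.mem_univ k,
      EReal.neg_le_neg_iff.2 (mirrorThreshold_flipAbs_le_abs hi hk hτi hτk)⟩
  have := Finset.card_le_card hsub
  rw [Finset.card_erase_of_mem hiT] at this
  unfold negativeCount
  omega

lemma mirrorWeight_flipAbs_eq_zero {α : ℝ} {g : Fin m → ℝ} {i : Fin m} (hi : g i ≤ 0)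
    (hiT : i ∉ flipSurvivors α g) : mirrorWeight α (flipAbs i g) i = 0 := by
  refine mirrorWeight_eq_zero ?_
  rw [flipAbs_apply_self]
  exact lt_of_not_ge fun h => hiT (Finset.mem_filter.2 ⟨Finset.mem_univ i, hi, h⟩)

lemma sum_mirrorWeight_flipAbs_le_one (α : ℝ) (g : Fin m → ℝ) :
    ∑ i, mirrorWeight α (flipAbs i g) i * (if g i ≤ 0 then 1 else 0) ≤ 1 := by
  set T := flipSurvivors α g
  have hterm : ∀ i, mirrorWeight α (flipAbs i g) i * (if g i ≤ 0 then 1 else 0)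
      ≤ if i ∈ T then 1 / (T.card : ℝ) else 0 := by
    intro i
    by_cases hi : g i ≤ 0
    · split_ifs with hiT
      · simpa using mirrorWeight_flipAbs_le_one_div_card hiT
      · simp [mirrorWeight_flipAbs_eq_zero hi hiT]
    · have : i ∉ T := fun hiT => hi (Finset.mem_filter.1 hiT).2.1
      simp [hi, this]
  calc ∑ i, mirrorWeight α (flipAbs i g) i * (if g i ≤ 0 then 1 else 0)
      ≤ ∑ i, if i ∈ T then 1 / (T.card : ℝ) else 0 := Finset.sum_le_sum fun i _ => hterm i
    _ = T.card * (1 / (T.card : ℝ)) := by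
      rw [Finset.sum_ite_mem, Finset.univ_inter, Finset.sum_const, nsmul_eq_mul]
    _ ≤ 1 := by
      rcases (Nat.zero_le T.card).eq_or_lt with h | h
      · simp [← h]
      · rw [mul_one_div_cancel (by positivity)]

lemma measurable_card_filter {X ι : Type*} [MeasurableSpace X] [Fintype ι] {p : X → ι → Prop}
    [∀ x, DecidablePred (p x)] (hp : ∀ j, MeasurableSet {x | p x j}) :
    Measurable fun x => ((Finset.univ.filter (p x)).card : ℝ) := by
  simp only [Finset.card_filter, Nat.cast_sum, Nat.cast_ite, Nat.cast_one, Nat.cast_zero]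
  exact Finset.measurable_sum _ fun j _ => Measurable.ite (hp j) measurable_const measurable_const

lemma mirrorThreshold_eq_iInf (α : ℝ) (g : Fin m → ℝ) :
    mirrorThreshold α g = ⨅ i, if fdpEstimate g |g i| ≤ α then ((|g i| : ℝ) : EReal) else ⊤ := by
  refine le_antisymm (le_iInf fun i => ?_) (le_sInf ?_)
  · split_ifs with h
    · exact sInf_le ⟨|g i|, ⟨⟨i, rfl⟩, h⟩, rfl⟩
    · exact le_top
  · rintro _ ⟨_, ⟨⟨i, rfl⟩, h⟩, rfl⟩
    exact iInf_le_of_le i (if_pos (c := fdpEstimate g |g i| ≤ α) h).le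

lemma measurable_fdpEstimate_abs (i : Fin m) :
    Measurable fun g : Fin m → ℝ => fdpEstimate g |g i| := by
  have hi : Measurable fun g : Fin m → ℝ => |g i| := (measurable_pi_apply i).abs
  refine ((measurable_card_filter fun j => ?_).const_add 1).div
    ((measurable_card_filter fun j => ?_).max measurable_const)
  · exact measurableSet_le (measurable_pi_apply j) hi.neg
  · exact measurableSet_le hi (measurable_pi_apply j)

lemma measurable_mirrorThreshold (α : ℝ) :
    Measurable fun g : Fin m → ℝ => mirrorThreshold α g := by
  simp_rw [mirrorThreshold_eq_iInf]
  exact .iInf fun i => .ite (measurableSet_le (measurable_fdpEstimate_abs i) measurable_const)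
    (measurable_coe_real_ereal.comp (measurable_pi_apply i).abs) measurable_const

lemma measurable_mirrorWeight (α : ℝ) (i : Fin m) :
    Measurable fun g : Fin m → ℝ => mirrorWeight α g i := by
  have hτ := measurable_mirrorThreshold (m := m) α
  have hτneg : Measurable fun g : Fin m → ℝ => -mirrorThreshold α g := hτ.neg
  have hcoe : ∀ j, Measurable fun g : Fin m → ℝ => ((g j : ℝ) : EReal) := fun j =>
    measurable_coe_real_ereal.comp (measurable_pi_apply j)
  exact (Measurable.ite (measurableSet_le hτ (hcoe i)) measurable_const measurable_const).div
    ((measurable_card_filter fun j => measurableSet_le (hcoe j) hτneg).const_add 1)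

lemma mul_ite_nonneg_le {w x k ε c : ℝ} (hw0 : 0 ≤ w) (hw1 : w ≤ 1) (hc : 1 ≤ c) :
    w * (if 0 ≤ x then 1 else 0)
      ≤ w * (if 0 < x ∧ k ≤ ε then 1 else 0) + c * (w * if x = 0 then 1 else 0)
        + (if ε < k then 1 else 0) := by
  rcases lt_trichotomy x 0 with h | h | h <;> rcases le_or_gt k ε with hk | hk
  all_goals split_ifs <;> first | tauto | linarith | nlinarith

lemma mul_ite_neg_add_mul_ite_zero (w x : ℝ) :
    (w * if x < 0 then 1 else 0) + (w * if x = 0 then 1 else 0) = w * if x ≤ 0 then 1 else 0 := by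
  rcases lt_trichotomy x 0 with h | h | h
  all_goals split_ifs <;> linarith

section Conditional

variable {Ω : Type*} {m₀ mΩ : MeasurableSpace Ω} {μ : Measure Ω} [IsFiniteMeasure μ]

lemma integral_mul_le_of_condExp_le (hm : m₀ ≤ mΩ) {W f h : Ω → ℝ}
    (hW : StronglyMeasurable[m₀] W) (hW0 : ∀ ω, 0 ≤ W ω) {C : ℝ} (hWC : ∀ ω, W ω ≤ C)
    (hf : Integrable f μ) (hh : Integrable h μ) {c : ℝ}
    (hfh : ∀ᵐ ω ∂μ, μ[f|m₀] ω ≤ c * μ[h|m₀] ω) :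
    ∫ ω, W ω * f ω ∂μ ≤ c * ∫ ω, W ω * h ω ∂μ := by
  have hWm : AEStronglyMeasurable W μ := (hW.mono hm).aestronglyMeasurable
  have hWb : ∀ᵐ ω ∂μ, ‖W ω‖ ≤ C :=
    ae_of_all _ fun ω => (Real.norm_of_nonneg (hW0 ω)).trans_le (hWC ω)
  have hpull : ∀ {g : Ω → ℝ}, Integrable g μ →
      ∫ ω, W ω * g ω ∂μ = ∫ ω, W ω * μ[g|m₀] ω ∂μ := fun hg => by
    rw [← integral_condExp hm]
    exact integral_congr_ae (condExp_mul_of_stronglyMeasurable_left hW (hg.bdd_mul hWm hWb) hg)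
  calc ∫ ω, W ω * f ω ∂μ = ∫ ω, W ω * μ[f|m₀] ω ∂μ := hpull hf
    _ ≤ ∫ ω, W ω * (c * μ[h|m₀] ω) ∂μ := by
      refine integral_mono_ae (integrable_condExp.bdd_mul hWm hWb)
        ((integrable_condExp.const_mul c).bdd_mul hWm hWb) ?_
      filter_upwards [hfh] with ω hω
      exact mul_le_mul_of_nonneg_left hω (hW0 ω)
    _ = c * ∫ ω, W ω * h ω ∂μ := by
      rw [hpull hh, ← integral_const_mul]
      simp only [mul_left_comm]

lemma integrable_ite_one {p : Ω → Prop} [DecidablePred p] (hp : MeasurableSet {ω | p ω}) :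
    Integrable (fun ω => if p ω then (1 : ℝ) else 0) μ :=
  .of_bound (Measurable.ite hp measurable_const measurable_const).aestronglyMeasurable 1
    (ae_of_all _ fun ω => by split_ifs <;> simp)

lemma integrable_mul_ite {W : Ω → ℝ} (hW : Measurable W) (hW0 : ∀ ω, 0 ≤ W ω)
    (hW1 : ∀ ω, W ω ≤ 1) {p : Ω → Prop} [DecidablePred p] (hp : MeasurableSet {ω | p ω}) :
    Integrable (fun ω => W ω * if p ω then 1 else 0) μ := by
  refine .of_bound (hW.mul (.ite hp measurable_const measurable_const)).aestronglyMeasurable 1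
    (ae_of_all _ fun ω => ?_)
  split_ifs <;> simp [abs_of_nonneg (hW0 ω), hW1 ω]

/-- Split `{X ≥ 0}` into `{X > 0, K ≤ ε}`, charged to `e^ε · {X < 0}` through `hcond`,
`{K > ε}`, and `{X = 0}`, which `e^ε ≥ 1` absorbs into `e^ε · {X ≤ 0}`. -/
lemma integral_mul_ite_nonneg_le (hm : m₀ ≤ mΩ) {X K W : Ω → ℝ} (hX : Measurable X)
    (hK : Measurable K) (hW : StronglyMeasurable[m₀] W) (hW0 : ∀ ω, 0 ≤ W ω)
    (hW1 : ∀ ω, W ω ≤ 1) {ε : ℝ} (hε : 0 ≤ ε)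
    (hcond : ∀ᵐ ω ∂μ,
      μ[fun ω => if 0 < X ω ∧ K ω ≤ ε then (1 : ℝ) else 0|m₀] ω
        ≤ Real.exp ε * μ[fun ω => if X ω < 0 then (1 : ℝ) else 0|m₀] ω) :
    ∫ ω, W ω * (if 0 ≤ X ω then 1 else 0) ∂μ
      ≤ Real.exp ε * ∫ ω, W ω * (if X ω ≤ 0 then 1 else 0) ∂μ + (μ {ω | ε < K ω}).toReal := by
  have hWm : Measurable W := (hW.mono hm).measurable
  have hsK : MeasurableSet {ω | ε < K ω} := measurableSet_lt measurable_const hK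
  have hsPos : MeasurableSet {ω | 0 < X ω ∧ K ω ≤ ε} :=
    (measurableSet_lt measurable_const hX).inter (measurableSet_le hK measurable_const)
  have hsNeg : MeasurableSet {ω | X ω < 0} := measurableSet_lt hX measurable_const
  have hsZero : MeasurableSet {ω | X ω = 0} := measurableSet_eq_fun hX measurable_const
  have hexchange := integral_mul_le_of_condExp_le hm hW hW0 hW1
    (integrable_ite_one hsPos) (integrable_ite_one hsNeg) hcond
  have htail : ∫ ω, (if ε < K ω then (1 : ℝ) else 0) ∂μ = (μ {ω | ε < K ω}).toReal := by
    simpa [Set.indicator_apply, measureReal_def] using integral_indicator_one (μ := μ) hsK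
  have hintPos := integrable_mul_ite hWm hW0 hW1 hsPos (μ := μ)
  have hintZero := integrable_mul_ite hWm hW0 hW1 hsZero (μ := μ)
  have hintK := integrable_ite_one hsK (μ := μ)
  calc ∫ ω, W ω * (if 0 ≤ X ω then 1 else 0) ∂μ
      ≤ ∫ ω, W ω * (if 0 < X ω ∧ K ω ≤ ε then 1 else 0)
          + Real.exp ε * (W ω * if X ω = 0 then 1 else 0) + (if ε < K ω then 1 else 0) ∂μ :=
        integral_mono (integrable_mul_ite hWm hW0 hW1 (measurableSet_le measurable_const hX))
          ((hintPos.add (hintZero.const_mul _)).add hintK)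
          fun ω => mul_ite_nonneg_le (hW0 ω) (hW1 ω) (Real.one_le_exp hε)
    _ = ∫ ω, W ω * (if 0 < X ω ∧ K ω ≤ ε then 1 else 0) ∂μ
          + Real.exp ε * ∫ ω, W ω * (if X ω = 0 then 1 else 0) ∂μ
          + (μ {ω | ε < K ω}).toReal := by
        rw [integral_add ?_ hintK, integral_add hintPos (hintZero.const_mul _),
          integral_const_mul, htail]
        exact hintPos.add (hintZero.const_mul _)
    _ ≤ Real.exp ε * (∫ ω, W ω * (if X ω < 0 then 1 else 0) ∂μ
          + ∫ ω, W ω * (if X ω = 0 then 1 else 0) ∂μ) + (μ {ω | ε < K ω}).toReal := by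
        linarith
    _ = Real.exp ε * ∫ ω, W ω * (if X ω ≤ 0 then 1 else 0) ∂μ + (μ {ω | ε < K ω}).toReal := by
        rw [← integral_add (integrable_mul_ite hWm hW0 hW1 hsNeg) hintZero]
        simp only [mul_ite_neg_add_mul_ite_zero]

end Conditional

section RandomVector

variable {Ω : Type*} {mΩ : MeasurableSpace Ω} {μ : Measure Ω}

lemma sigmaG_le {G : Fin m → Ω → ℝ} (hG : ∀ i, Measurable (G i)) (i : Fin m) :
    sigmaG G i ≤ mΩ :=
  measurable_iff_comap_le.1 ((hG i).abs.prodMk (measurable_pi_lambda _ fun j => hG j.1))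

lemma measurable_flipAbs_sigmaG (G : Fin m → Ω → ℝ) (i : Fin m) :
    Measurable[sigmaG G i] fun ω => flipAbs i fun k => G k ω := by
  have hφ := comap_measurable (m := inferInstance)
    (fun ω => (|G i ω|, fun j : {j : Fin m // j ≠ i} => G j.1 ω))
  refine (@measurable_pi_iff Ω _ _ (sigmaG G i) _ _).2 fun j => ?_
  rcases eq_or_ne j i with rfl | hj
  · simp only [flipAbs_apply_self]
    exact measurable_fst.comp hφ
  · simp only [flipAbs_apply_of_ne _ hj]
    exact (measurable_pi_apply (⟨j, hj⟩ : {j // j ≠ i})).comp (measurable_snd.comp hφ)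

lemma stronglyMeasurable_mirrorWeight_flipAbs (α : ℝ) (G : Fin m → Ω → ℝ) (i : Fin m) :
    StronglyMeasurable[sigmaG G i] fun ω => mirrorWeight α (flipAbs i fun k => G k ω) i :=
  ((measurable_mirrorWeight α i).comp (measurable_flipAbs_sigmaG G i)).stronglyMeasurable

lemma integrable_mirrorWeight_flipAbs_mul_ite [IsFiniteMeasure μ] {G : Fin m → Ω → ℝ}
    (hG : ∀ i, Measurable (G i)) (α : ℝ) (i : Fin m) {p : Ω → Prop} [DecidablePred p]
    (hp : MeasurableSet {ω | p ω}) :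
    Integrable (fun ω => mirrorWeight α (flipAbs i fun k => G k ω) i * if p ω then 1 else 0) μ :=
  integrable_mul_ite
    ((stronglyMeasurable_mirrorWeight_flipAbs α G i).mono (sigmaG_le hG i)).measurable
    (fun _ => mirrorWeight_nonneg α _ i) (fun _ => mirrorWeight_le_one α _ i) hp

lemma sum_integral_mirrorWeight_flipAbs_nonpos_le_one [IsProbabilityMeasure μ]
    {G : Fin m → Ω → ℝ} (hG : ∀ i, Measurable (G i)) (α : ℝ) (s : Finset (Fin m)) :
    ∑ i ∈ s, ∫ ω, mirrorWeight α (flipAbs i fun k => G k ω) i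
      * (if G i ω ≤ 0 then 1 else 0) ∂μ ≤ 1 := by
  have hterm i ω : 0 ≤ mirrorWeight α (flipAbs i fun k => G k ω) i
      * (if G i ω ≤ 0 then 1 else 0) :=
    mul_nonneg (mirrorWeight_nonneg α _ i) (by split_ifs <;> norm_num)
  rw [← integral_finsetSum s fun i _ =>
    integrable_mirrorWeight_flipAbs_mul_ite hG α i (measurableSet_le (hG i) measurable_const)]
  refine (integral_mono_of_nonneg (ae_of_all _ fun ω => Finset.sum_nonneg fun i _ => hterm i ω)
    (integrable_const 1) (ae_of_all _ fun ω => ?_)).trans (by simp)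
  exact (Finset.sum_le_univ_sum_of_nonneg (hterm · ω)).trans
    (sum_mirrorWeight_flipAbs_le_one α fun k => G k ω)

end RandomVector

end Mirror

open Mirror

theorem null_evalue_mass_bound_general
    {Ω : Type*} [MeasurableSpace Ω] (P : Measure Ω) [IsProbabilityMeasure P]
    (m : ℕ) (H0 : Finset (Fin m)) (α : ℝ)
    (G : Fin m → Ω → ℝ) (hGmeas : ∀ i, Measurable (G i))
    (KL : Fin m → Ω → ℝ) (hKLmeas : ∀ i, Measurable (KL i))
    (hcond : ∀ i ∈ H0, ∀ ε : ℝ, 0 ≤ ε →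
      ∀ᵐ ω ∂P,
        (P[(fun ω' => if 0 < G i ω' ∧ KL i ω' ≤ ε then (1 : ℝ) else 0) | sigmaG G i]) ω
          ≤ Real.exp ε *
            (P[(fun ω' => if G i ω' < 0 then (1 : ℝ) else 0) | sigmaG G i]) ω) :
    (∫ ω, ∑ i ∈ H0, mirrorEValue α (fun k => G k ω) i ∂P)
      ≤ ⨅ ε : {ε : ℝ // 0 ≤ ε},
          (m : ℝ) * (Real.exp ε.1 + ∑ i ∈ H0, (P {ω | ε.1 < KL i ω}).toReal) := by
  have : Nonempty {ε : ℝ // 0 ≤ ε} := ⟨⟨0, le_rfl⟩⟩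
  refine le_ciInf fun ⟨ε, hε⟩ => ?_
  set W : Fin m → Ω → ℝ := fun i ω => mirrorWeight α (flipAbs i fun k => G k ω) i
  have hnull : ∀ i ∈ H0, ∫ ω, W i ω * (if 0 ≤ G i ω then 1 else 0) ∂P
      ≤ Real.exp ε * ∫ ω, W i ω * (if G i ω ≤ 0 then 1 else 0) ∂P
        + (P {ω | ε < KL i ω}).toReal := fun i hi =>
    integral_mul_ite_nonneg_le (sigmaG_le hGmeas i) (hGmeas i) (hKLmeas i)
      (stronglyMeasurable_mirrorWeight_flipAbs α G i) (fun _ => mirrorWeight_nonneg α _ i)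
      (fun _ => mirrorWeight_le_one α _ i) hε (hcond i hi ε hε)
  simp_rw [mirrorEValue_eq_mirrorWeight_flipAbs]
  rw [integral_finsetSum H0 fun i _ => (integrable_mirrorWeight_flipAbs_mul_ite hGmeas α i
    (measurableSet_le measurable_const (hGmeas i))).const_mul _]
  simp_rw [integral_const_mul]
  calc ∑ i ∈ H0, (m : ℝ) * ∫ ω, W i ω * (if 0 ≤ G i ω then 1 else 0) ∂P
      ≤ ∑ i ∈ H0, (m : ℝ) * (Real.exp ε * ∫ ω, W i ω * (if G i ω ≤ 0 then 1 else 0) ∂P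
        + (P {ω | ε < KL i ω}).toReal) :=
        Finset.sum_le_sum fun i hi => mul_le_mul_of_nonneg_left (hnull i hi) m.cast_nonneg
    _ = m * (Real.exp ε * ∑ i ∈ H0, ∫ ω, W i ω * (if G i ω ≤ 0 then 1 else 0) ∂P
        + ∑ i ∈ H0, (P {ω | ε < KL i ω}).toReal) := by
      rw [← Finset.mul_sum, Finset.sum_add_distrib, Finset.mul_sum]
    _ ≤ m * (Real.exp ε + ∑ i ∈ H0, (P {ω | ε < KL i ω}).toReal) := by
      gcongr
      exact mul_le_of_le_one_right (Real.exp_pos ε).le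
        (sum_integral_mirrorWeight_flipAbs_nonpos_le_one hGmeas α H0)

/-- **Bound on the total null e-value mass under approximate pairwise exchangeability
(Theorem 3, part (a)).**
If, for every null `i` and every `ε ≥ 0`, almost surely
`E[1{G i > 0, K̂L i ≤ ε} | σ(|G i|, (G j)_{j≠i})] ≤ e^ε · E[1{G i < 0} | σ(|G i|, (G j)_{j≠i})]`,
then `E[Σ_{i∈H₀} e i] ≤ inf_{ε ≥ 0} m·[e^ε + Σ_{i∈H₀} ℙ(K̂L i > ε)]`. -/
theorem null_evalue_mass_bound
    {Ω : Type*} [MeasurableSpace Ω] (P : Measure Ω) [IsProbabilityMeasure P]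
    (m : ℕ) (hm : 1 ≤ m) (H0 : Finset (Fin m)) (α : ℝ) (hα : α ∈ Set.Ioo (0 : ℝ) 1)
    (G : Fin m → Ω → ℝ) (hGmeas : ∀ i, Measurable (G i))
    (KL : Fin m → Ω → ℝ) (hKLmeas : ∀ i, Measurable (KL i))
    (hcond : ∀ i ∈ H0, ∀ ε : ℝ, 0 ≤ ε →
      ∀ᵐ ω ∂P,
        (P[(fun ω' => if 0 < G i ω' ∧ KL i ω' ≤ ε then (1 : ℝ) else 0) | sigmaG G i]) ω
          ≤ Real.exp ε *
            (P[(fun ω' => if G i ω' < 0 then (1 : ℝ) else 0) | sigmaG G i]) ω) :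
    (∫ ω, ∑ i ∈ H0, mirrorEValue α (fun k => G k ω) i ∂P)
      ≤ ⨅ ε : {ε : ℝ // 0 ≤ ε},
          (m : ℝ) * (Real.exp ε.1 + ∑ i ∈ H0, (P {ω | ε.1 < KL i ω}).toReal) :=
  null_evalue_mass_bound_general P m H0 α G hGmeas KL hKLmeas hcond
end

section
/- FDR bound under approximate pairwise exchangeability (Theorem 3, part (b)). Under the same setup and hypothesis as Theorem 3, part (a) — G_1,…,G_m real random variables, τ and e_i defined from G and α ∈ (0,1) by the mirror threshold and e-value formulas, (K̂L_i)_{i∈H₀} real random variables satisfying, for every i ∈ H₀ and ε ≥ 0, E[1{G_i > 0, K̂L_i ≤ ε} | 𝓖_i] ≤ e^ε · E[1{G_i < 0} | 𝓖_i] a.s., with 𝓖_i = σ(|G_i|, (G_j)_{j≠i}) — let R_ebh be the rejection set of the e-BH procedure at level α applied to (e_1,…,e_m). Then FDR := E[ |R_ebh ∩ H₀| / max(|R_ebh|, 1) ] ≤ inf_{ε ≥ 0} α·[ e^ε + Σ_{i∈H₀} ℙ( K̂L_i > ε ) ]. -/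
open MeasureTheory
open scoped Classical

/-!
When the mirror threshold `τ` is finite, the mirror e-values take only the values `0` and
`m / (1 + #{j | G j ≤ -τ})`, so e-BH rejects exactly `{i | τ ≤ G i}`; as `τ` passes the mirror
FDP test, `FDP ≤ α · ∑_{i ∈ H₀} w i` with `w i = 1{τ ≤ G i} / (1 + #{j | G j ≤ -τ})`.

Recomputing `w i` after replacing `G i` by `|G i|` gives a weight `Y i` that is
`σ(|G i|, (G j)_{j ≠ i})`-measurable and equals `w i` on `{0 ≤ G i}`. Splitting this event into
`{0 < G i, KL i ≤ ε}`, `{G i = 0}` and `{KL i > ε}`, the hypothesis bounds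
`E[Y i; 0 < G i, KL i ≤ ε]` by `e^ε E[Y i; G i < 0]`, hence
`E[w i] ≤ e^ε E[Y i; G i ≤ 0] + ℙ(KL i > ε)`.

Finally `∑ᵢ Y i · 1{G i ≤ 0} ≤ 1` pointwise: for the set `A` of indices with `G i ≤ 0` and
`Y i ≠ 0`, the folded thresholds are ordered like the `|G i|`, so each `Y i` with `i ∈ A` has at
least `#A` in its denominator.
-/

section

open Finset

variable {m : ℕ} {Ω : Type*}

theorem sortedDesc_antitone (e : Fin m → ℝ) : Antitone (sortedDesc e) :=
  fun _ _ hkl => Tuple.monotone_sort e (Fin.rev_le_rev.2 hkl)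

theorem le_sortedDesc_iff (e : Fin m → ℝ) (a : ℝ) (k : Fin m) :
    a ≤ sortedDesc e k ↔ (k : ℕ) < #{i | a ≤ e i} := by
  have hcard : #{k | a ≤ sortedDesc e k} = #{i | a ≤ e i} := by
    refine card_equiv (Fin.revPerm.trans (Tuple.sort e)) fun k => ?_
    simp only [mem_filter, mem_univ, true_and]; rfl
  rw [← hcard, Tuple.lt_card_ge_iff_apply_ge_of_antitone (sortedDesc_antitone e)]

theorem sortedDesc_pos_of_one_div_le {α : ℝ} (hα : 0 < α) {e : Fin m → ℝ} {k : Fin m}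
    (hk : 1 / α ≤ ((k : ℝ) + 1) * sortedDesc e k / m) : 0 < sortedDesc e k := by
  by_contra! hnonpos
  have : ((k : ℝ) + 1) * sortedDesc e k / m ≤ 0 :=
    div_nonpos_of_nonpos_of_nonneg (mul_nonpos_of_nonneg_of_nonpos (by positivity) hnonpos)
      m.cast_nonneg
  linarith [one_div_pos.2 hα]

theorem ebh_eq_empty_of_nonpos {α : ℝ} (hα : 0 < α) {e : Fin m → ℝ} (he : ∀ i, e i ≤ 0) :
    ebh α e = ∅ := by
  rw [ebh, dif_neg]
  simp only [not_nonempty_iff_eq_empty, filter_eq_empty_iff, mem_univ, true_implies]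
  exact fun k hk => (sortedDesc_pos_of_one_div_le hα hk).not_ge (he _)

theorem ebh_ite_const {α c : ℝ} (hα : 0 < α) (hc : 0 < c) (p : Fin m → Prop) [DecidablePred p]
    (h : 1 / α ≤ #{i | p i} * c / m) :
    ebh α (fun i => if p i then c else 0) = ({i | p i} : Finset (Fin m)) := by
  set e : Fin m → ℝ := fun i => if p i then c else 0
  have hval : ∀ k, 0 < sortedDesc e k → sortedDesc e k = c := by
    intro k
    by_cases hk : p (Tuple.sort e k.rev) <;> simp [sortedDesc, e, hk]
  have hcount : #{i | c ≤ e i} = #{i | p i} := by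
    congr 1; ext i; by_cases hi : p i <;> simp [e, hi, hc.not_ge]
  have hn : 0 < #{i | p i} := by
    by_contra! hn
    rw [nonpos_iff_eq_zero.1 hn] at h
    simp only [CharP.cast_eq_zero, zero_mul, zero_div] at h
    linarith [one_div_pos.2 hα]
  set k₀ : Fin m := ⟨#{i | p i} - 1, by
    have := card_le_univ (univ.filter fun i => p i); rw [Fintype.card_fin] at this; omega⟩
  have hk₀ : sortedDesc e k₀ = c :=
    hval k₀ (hc.trans_le ((le_sortedDesc_iff e c k₀).2
      (by rw [hcount]; exact Nat.sub_one_lt_of_lt hn)))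
  have hK : (univ.filter fun k : Fin m => 1 / α ≤ ((k : ℝ) + 1) * sortedDesc e k / m).Nonempty := by
    refine ⟨k₀, mem_filter.2 ⟨mem_univ _, ?_⟩⟩
    rw [hk₀, show ((k₀ : ℕ) : ℝ) + 1 = #{i | p i} by simp [k₀, Nat.cast_sub hn]]
    exact h
  rw [ebh, dif_pos hK, hval _ (sortedDesc_pos_of_one_div_le hα (mem_filter.1 (max'_mem _ hK)).2)]
  ext i
  by_cases hi : p i <;> simp [e, hi, hc.not_ge]

def IsMirrorAdmissible (α : ℝ) (v : Fin m → ℝ) (x : ℝ) : Prop :=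
  (∃ i, |v i| = x) ∧ (1 + (#{j | v j ≤ -x} : ℝ)) / max (#{j | x ≤ v j} : ℝ) 1 ≤ α

theorem mirrorThreshold_eq_sInf (α : ℝ) (v : Fin m → ℝ) :
    mirrorThreshold α v = sInf ((↑) '' {x | IsMirrorAdmissible α v x}) :=
  rfl

theorem mirrorThreshold_nonneg (α : ℝ) (v : Fin m → ℝ) : 0 ≤ mirrorThreshold α v := by
  refine le_sInf ?_
  rintro _ ⟨x, ⟨⟨i, rfl⟩, -⟩, rfl⟩
  exact EReal.coe_nonneg.2 (abs_nonneg _)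

theorem mirrorThreshold_eq_top_or_exists (α : ℝ) (v : Fin m → ℝ) :
    mirrorThreshold α v = ⊤ ∨ ∃ x, IsMirrorAdmissible α v x ∧ mirrorThreshold α v = x := by
  rcases Set.eq_empty_or_nonempty {x | IsMirrorAdmissible α v x} with h | h
  · left
    rw [mirrorThreshold_eq_sInf, h, Set.image_empty, sInf_empty]
  · right
    have hfin : {x | IsMirrorAdmissible α v x}.Finite :=
      (Set.finite_range fun i => |v i|).subset fun x hx => hx.1
    obtain ⟨x, hx, hmin⟩ := Set.exists_min_image _ id hfin h
    exact ⟨x, hx, (EReal.coe_strictMono.monotone.map_isLeast ⟨hx, hmin⟩).isGLB.sInf_eq⟩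

theorem IsMirrorAdmissible.one_add_card_le {α : ℝ} {v : Fin m → ℝ} {x : ℝ}
    (h : IsMirrorAdmissible α v x) (hα : α < 1) :
    1 + (#{j | v j ≤ -x} : ℝ) ≤ α * #{j | x ≤ v j} := by
  obtain ⟨-, h⟩ := h
  rcases Nat.eq_zero_or_pos #{j | x ≤ v j} with h0 | hpos
  · rw [h0, Nat.cast_zero, max_eq_right zero_le_one, div_one] at h
    linarith [Nat.cast_nonneg (α := ℝ) #{j | v j ≤ -x}]
  · have hpos' : (1 : ℝ) ≤ #{j | x ≤ v j} := by exact_mod_cast hpos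
    rw [max_eq_left hpos', div_le_iff₀ (zero_lt_one.trans_le hpos')] at h
    linarith

theorem isMirrorAdmissible_comp_perm_iff {α : ℝ} {v : Fin m → ℝ} {x : ℝ}
    (σ : Equiv.Perm (Fin m)) : IsMirrorAdmissible α (v ∘ σ) x ↔ IsMirrorAdmissible α v x := by
  have hneg : #{j | v (σ j) ≤ -x} = #{j | v j ≤ -x} := card_equiv σ fun j => by simp
  have hpos : #{j | x ≤ v (σ j)} = #{j | x ≤ v j} := card_equiv σ fun j => by simp
  simp only [IsMirrorAdmissible, Function.comp_apply, hneg, hpos]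
  rw [σ.surjective.exists (p := fun i => |v i| = x)]

theorem IsMirrorAdmissible.mono {α : ℝ} {v w : Fin m → ℝ} {x : ℝ}
    (h : IsMirrorAdmissible α v x) (hvw : v ≤ w) (hx : ∃ i, |w i| = x) :
    IsMirrorAdmissible α w x := by
  have hneg : #{j | w j ≤ -x} ≤ #{j | v j ≤ -x} := by
    refine card_le_card fun j hj => ?_
    simp only [mem_filter, mem_univ, true_and] at hj ⊢
    exact (hvw j).trans hj
  have hpos : #{j | x ≤ v j} ≤ #{j | x ≤ w j} := by
    refine card_le_card fun j hj => ?_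
    simp only [mem_filter, mem_univ, true_and] at hj ⊢
    exact hj.trans (hvw j)
  refine ⟨hx, le_trans (div_le_div₀ (by positivity) ?_ (by positivity) ?_) h.2⟩
  · exact add_le_add_right (Nat.cast_le.2 hneg) 1
  · exact max_le_max (Nat.cast_le.2 hpos) le_rfl

theorem mirrorThreshold_le_of_imp {α : ℝ} {v w : Fin m → ℝ}
    (h : ∀ x, IsMirrorAdmissible α v x → IsMirrorAdmissible α w x) :
    mirrorThreshold α w ≤ mirrorThreshold α v :=
  sInf_le_sInf (Set.image_mono h)

theorem abs_update_abs {ι : Type*} [DecidableEq ι] (v : ι → ℝ) (i j : ι) :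
    |Function.update v i |v i| j| = |v j| := by
  rcases eq_or_ne j i with rfl | hji
  · simp
  · rw [Function.update_of_ne hji]

theorem mirrorThreshold_update_abs_le {α : ℝ} {v : Fin m → ℝ} {i k : Fin m} (hik : i ≠ k)
    (hvi : v i ≤ 0) (hvk : v k ≤ 0) (habs : |v k| ≤ |v i|) :
    mirrorThreshold α (Function.update v i |v i|) ≤
      mirrorThreshold α (Function.update v k |v k|) := by
  -- After swapping `i` and `k`, the vector folded at `i` dominates the one folded at `k`.
  refine mirrorThreshold_le_of_imp fun x hx => ?_
  rw [← isMirrorAdmissible_comp_perm_iff (Equiv.swap i k)]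
  refine hx.mono (fun j => ?_) ?_
  · rw [abs_of_nonpos hvi, abs_of_nonpos hvk] at habs
    rcases eq_or_ne j i with rfl | hji
    · simp only [Function.comp_apply, Equiv.swap_apply_left, Function.update_of_ne hik,
        Function.update_of_ne hik.symm]
      linarith
    rcases eq_or_ne j k with rfl | hjk
    · simp only [Function.comp_apply, Equiv.swap_apply_right, Function.update_self,
        abs_of_nonpos hvi, abs_of_nonpos hvk, neg_le_neg_iff]
      linarith
    · simp [Equiv.swap_apply_of_ne_of_ne hji hjk, Function.update_of_ne hji,
        Function.update_of_ne hjk]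
  · obtain ⟨j, hj⟩ := hx.1
    exact ⟨Equiv.swap i k j, by simp [abs_update_abs, ← hj]⟩

noncomputable def mirrorWeight (α : ℝ) (v : Fin m → ℝ) (i : Fin m) : ℝ :=
  (if mirrorThreshold α v ≤ (v i : EReal) then 1 else 0) /
    (1 + (#{j | (v j : EReal) ≤ -mirrorThreshold α v} : ℝ))

noncomputable def foldedMirrorWeight (α : ℝ) (v : Fin m → ℝ) (i : Fin m) : ℝ :=
  mirrorWeight α (Function.update v i |v i|) i

theorem mirrorEValue_eq_mul (α : ℝ) (v : Fin m → ℝ) (i : Fin m) :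
    mirrorEValue α v i = m * mirrorWeight α v i :=
  mul_div_assoc _ _ _

theorem mirrorWeight_nonneg (α : ℝ) (v : Fin m → ℝ) (i : Fin m) : 0 ≤ mirrorWeight α v i := by
  unfold mirrorWeight
  positivity

theorem mirrorWeight_le_inv (α : ℝ) (v : Fin m → ℝ) (i : Fin m) :
    mirrorWeight α v i ≤ (1 + (#{j | (v j : EReal) ≤ -mirrorThreshold α v} : ℝ))⁻¹ := by
  rw [mirrorWeight, div_eq_mul_inv]
  refine mul_le_of_le_one_left (by positivity) ?_
  split_ifs <;> norm_num

theorem mirrorWeight_le_one (α : ℝ) (v : Fin m → ℝ) (i : Fin m) : mirrorWeight α v i ≤ 1 :=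
  (mirrorWeight_le_inv α v i).trans (inv_le_one_of_one_le₀ (by simp))

theorem mirrorWeight_of_eq_coe {α : ℝ} {v : Fin m → ℝ} {x : ℝ} (hτ : mirrorThreshold α v = x)
    (i : Fin m) :
    mirrorWeight α v i = (if x ≤ v i then 1 else 0) / (1 + (#{j | v j ≤ -x} : ℝ)) := by
  simp only [mirrorWeight, hτ, ← EReal.coe_neg, EReal.coe_le_coe_iff]

theorem mirrorWeight_eq_ite (α : ℝ) (v : Fin m → ℝ) (i : Fin m) :
    mirrorWeight α v i = if 0 ≤ v i then foldedMirrorWeight α v i else 0 := by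
  split_ifs with h
  · rw [foldedMirrorWeight, abs_of_nonneg h, Function.update_eq_self]
  · have hτ : ¬mirrorThreshold α v ≤ (v i : EReal) := fun hτ =>
      h (EReal.coe_nonneg.1 ((mirrorThreshold_nonneg α v).trans hτ))
    rw [mirrorWeight, if_neg hτ, zero_div]

theorem ebh_mirrorEValue {α : ℝ} (hα : α ∈ Set.Ioo (0 : ℝ) 1) (v : Fin m → ℝ) :
    ebh α (fun i => mirrorEValue α v i) =
      ({i | mirrorThreshold α v ≤ (v i : EReal)} : Finset (Fin m)) := by
  rcases mirrorThreshold_eq_top_or_exists α v with hτ | ⟨x, hx, hτ⟩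
  · rw [ebh_eq_empty_of_nonpos hα.1 fun i => by simp [mirrorEValue, hτ]]
    simp [hτ]
  obtain ⟨i₀, -⟩ := hx.1
  have hD : (0 : ℝ) < 1 + #{j | v j ≤ -x} := by positivity
  have hm : (0 : ℝ) < m := Nat.cast_pos.2 i₀.pos
  have he : (fun i => mirrorEValue α v i) =
      fun i => if x ≤ v i then (m : ℝ) / (1 + #{j | v j ≤ -x}) else 0 := by
    ext i
    rw [mirrorEValue_eq_mul, mirrorWeight_of_eq_coe hτ]
    split_ifs <;> simp [div_eq_mul_inv]
  rw [he, ebh_ite_const hα.1 (div_pos hm hD)]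
  · simp [hτ]
  · rw [show (#{i | x ≤ v i} : ℝ) * (m / (1 + #{j | v j ≤ -x})) / m
        = #{i | x ≤ v i} / (1 + #{j | v j ≤ -x}) by field_simp,
      div_le_div_iff₀ hα.1 hD]
    linarith [hx.one_add_card_le hα.2]

theorem fdp_ebh_mirrorEValue_le {α : ℝ} (hα : α ∈ Set.Ioo (0 : ℝ) 1) (v : Fin m → ℝ)
    (S : Finset (Fin m)) :
    (#((ebh α fun i => mirrorEValue α v i) ∩ S) : ℝ) /
        max (#(ebh α fun i => mirrorEValue α v i) : ℝ) 1
      ≤ α * ∑ i ∈ S, mirrorWeight α v i := by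
  rw [ebh_mirrorEValue hα]
  rcases mirrorThreshold_eq_top_or_exists α v with hτ | ⟨x, hx, hτ⟩
  · have hR : ({i | mirrorThreshold α v ≤ (v i : EReal)} : Finset (Fin m)) = ∅ := by simp [hτ]
    rw [hR, empty_inter, card_empty, Nat.cast_zero, zero_div]
    exact mul_nonneg hα.1.le (sum_nonneg fun i _ => mirrorWeight_nonneg α v i)
  have hkey := hx.one_add_card_le hα.2
  have hD : (0 : ℝ) < 1 + #{j | v j ≤ -x} := by positivity
  have hN : (0 : ℝ) < #{j | x ≤ v j} := by nlinarith [hα.1]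
  simp only [mirrorWeight_of_eq_coe hτ, hτ, EReal.coe_le_coe_iff, ← sum_div, sum_boole,
    filter_inter, univ_inter, max_eq_left (Nat.one_le_cast.2 (Nat.cast_pos.1 hN))]
  rw [div_le_iff₀ hN, mul_div_assoc', div_mul_eq_mul_div, le_div_iff₀ hD]
  nlinarith [Nat.cast_nonneg (α := ℝ) #{i ∈ S | x ≤ v i}]

theorem coe_le_neg_mirrorThreshold_update {α : ℝ} {v : Fin m → ℝ} {i k : Fin m} (hki : k ≠ i)
    (hvi : v i ≤ 0) (hvk : v k ≤ 0)
    (hi : mirrorThreshold α (Function.update v i |v i|) ≤ ((|v i| : ℝ) : EReal))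
    (hk : mirrorThreshold α (Function.update v k |v k|) ≤ ((|v k| : ℝ) : EReal)) :
    (Function.update v i |v i| k : EReal) ≤ -mirrorThreshold α (Function.update v i |v i|) := by
  rw [Function.update_of_ne hki, ← neg_neg (v k), ← abs_of_nonpos hvk, EReal.coe_neg,
    EReal.neg_le_neg_iff]
  rcases le_total |v k| |v i| with h | h
  · exact (mirrorThreshold_update_abs_le hki.symm hvi hvk h).trans hk
  · exact hi.trans (EReal.coe_le_coe_iff.2 h)

theorem sum_foldedMirrorWeight_le_one (α : ℝ) (v : Fin m → ℝ) (S : Finset (Fin m)) :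
    ∑ i ∈ S, (if v i ≤ 0 then foldedMirrorWeight α v i else 0) ≤ 1 := by
  set A := S.filter fun i => v i ≤ 0 ∧
    mirrorThreshold α (Function.update v i |v i|) ≤ ((|v i| : ℝ) : EReal)
  have hsum : ∑ i ∈ S, (if v i ≤ 0 then foldedMirrorWeight α v i else 0)
      = ∑ i ∈ A, foldedMirrorWeight α v i := by
    rw [sum_filter]
    refine sum_congr rfl fun i _ => ?_
    by_cases h : mirrorThreshold α (Function.update v i |v i|) ≤ ((|v i| : ℝ) : EReal)
    · simp [h]
    · simp [h, foldedMirrorWeight, mirrorWeight]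
  -- Every other index of `A` is counted in the denominator of the weight of `i`.
  have hbound : ∀ i ∈ A, foldedMirrorWeight α v i ≤ (#A : ℝ)⁻¹ := by
    intro i hi
    obtain ⟨-, hvi, hτi⟩ := mem_filter.1 hi
    have hsub : A.erase i ⊆ ({j | (Function.update v i |v i| j : EReal) ≤
        -mirrorThreshold α (Function.update v i |v i|)} : Finset (Fin m)) := fun k hk => by
      obtain ⟨hki, hkA⟩ := mem_erase.1 hk
      obtain ⟨-, hvk, hτk⟩ := mem_filter.1 hkA
      exact mem_filter.2 ⟨mem_univ _, coe_le_neg_mirrorThreshold_update hki hvi hvk hτi hτk⟩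
    have hcard := card_le_card hsub
    rw [card_erase_of_mem hi] at hcard
    refine (mirrorWeight_le_inv α _ i).trans (inv_anti₀ (by exact_mod_cast card_pos.2 ⟨i, hi⟩) ?_)
    exact_mod_cast (by omega : #A ≤ 1 + _)
  calc ∑ i ∈ S, (if v i ≤ 0 then foldedMirrorWeight α v i else 0)
      = ∑ i ∈ A, foldedMirrorWeight α v i := hsum
    _ ≤ #A • (#A : ℝ)⁻¹ := sum_le_card_nsmul _ _ _ hbound
    _ ≤ 1 := by rw [nsmul_eq_mul]; exact mul_inv_le_one

theorem measurable_card_filter {X ι : Type*} [MeasurableSpace X] [Fintype ι]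
    {p : ι → X → Prop} [∀ j x, Decidable (p j x)] (hp : ∀ j, MeasurableSet {x | p j x}) :
    Measurable fun x => (#{j | p j x} : ℝ) := by
  simp_rw [natCast_card_filter]
  exact Finset.measurable_sum _ fun j _ => Measurable.ite (hp j) measurable_const measurable_const

theorem mirrorThreshold_eq_iInf (α : ℝ) (v : Fin m → ℝ) :
    mirrorThreshold α v =
      ⨅ i, if IsMirrorAdmissible α v |v i| then ((|v i| : ℝ) : EReal) else ⊤ := by
  refine le_antisymm (le_iInf fun i => ?_) (le_sInf ?_)
  · split_ifs with h
    · exact sInf_le ⟨_, h, rfl⟩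
    · exact le_top
  · rintro _ ⟨x, hx, rfl⟩
    obtain ⟨i, rfl⟩ := hx.1
    exact iInf_le_of_le i (by rw [if_pos (show IsMirrorAdmissible α v |v i| from hx)])

theorem measurable_mirrorThreshold (α : ℝ) :
    Measurable fun v : Fin m → ℝ => mirrorThreshold α v := by
  simp_rw [mirrorThreshold_eq_iInf]
  refine Measurable.iInf fun i => Measurable.ite ?_
    (measurable_coe_real_ereal.comp (measurable_pi_apply i).abs) measurable_const
  have hset : {v : Fin m → ℝ | IsMirrorAdmissible α v |v i|} =
      {v | (1 + (#{j | v j ≤ -|v i|} : ℝ)) / max (#{j | |v i| ≤ v j} : ℝ) 1 ≤ α} :=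
    Set.ext fun v => and_iff_right ⟨i, rfl⟩
  rw [hset]
  refine measurableSet_le (Measurable.div (measurable_const.add ?_) (Measurable.max ?_
    measurable_const)) measurable_const
  · exact measurable_card_filter fun j =>
      measurableSet_le (measurable_pi_apply j) (measurable_pi_apply i).abs.neg
  · exact measurable_card_filter fun j =>
      measurableSet_le (measurable_pi_apply i).abs (measurable_pi_apply j)

theorem measurable_mirrorWeight (α : ℝ) (i : Fin m) :
    Measurable fun v : Fin m → ℝ => mirrorWeight α v i := by
  have hτ := measurable_mirrorThreshold (m := m) α
  refine Measurable.div (Measurable.ite ?_ measurable_const measurable_const)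
    (measurable_const.add (measurable_card_filter fun j => ?_))
  · exact measurableSet_le hτ (measurable_coe_real_ereal.comp (measurable_pi_apply i))
  · exact measurableSet_le (measurable_coe_real_ereal.comp (measurable_pi_apply j))
      (continuous_neg.measurable.comp hτ)

theorem update_eq_funSplitAt_symm {ι β : Type*} [DecidableEq ι] [TopologicalSpace β]
    (v : ι → β) (i : ι) (a : β) :
    Function.update v i a = (Homeomorph.funSplitAt β i).symm (a, fun j => v j) := by
  ext j
  rcases eq_or_ne j i with rfl | hji
  · simp
  · simp [hji]

theorem sigmaG_le [mΩ : MeasurableSpace Ω] {G : Fin m → Ω → ℝ} (hG : ∀ i, Measurable (G i))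
    (i : Fin m) :
    sigmaG G i ≤ mΩ :=
  ((hG i).abs.prodMk (measurable_pi_lambda (fun ω (j : {j // j ≠ i}) => G j.1 ω)
    fun j => hG j.1)).comap_le

theorem stronglyMeasurable_foldedMirrorWeight [MeasurableSpace Ω] (α : ℝ) (G : Fin m → Ω → ℝ)
    (i : Fin m) :
    StronglyMeasurable[sigmaG G i] fun ω => foldedMirrorWeight α (fun k => G k ω) i := by
  have hg : Measurable fun p => mirrorWeight α ((Homeomorph.funSplitAt ℝ i).symm p) i :=
    (measurable_mirrorWeight α i).comp (Homeomorph.funSplitAt ℝ i).symm.continuous.measurable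
  have hφ : Measurable[sigmaG G i] fun ω => (|G i ω|, fun j : {j // j ≠ i} => G j.1 ω) :=
    comap_measurable _
  have hfactor : (fun ω => foldedMirrorWeight α (fun k => G k ω) i) =
      (fun p => mirrorWeight α ((Homeomorph.funSplitAt ℝ i).symm p) i) ∘
        fun ω => (|G i ω|, fun j : {j // j ≠ i} => G j.1 ω) := by
    ext ω
    simp only [foldedMirrorWeight, update_eq_funSplitAt_symm, Function.comp_apply]
  rw [hfactor]
  exact (hg.comp hφ).stronglyMeasurable

theorem integral_mul_le_of_condExp_le {m' mΩ : MeasurableSpace Ω} {μ : Measure Ω}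
    [IsFiniteMeasure μ] (hm : m' ≤ mΩ) {Y f g : Ω → ℝ} (hY : StronglyMeasurable[m'] Y)
    (hY0 : ∀ ω, 0 ≤ Y ω) {C : ℝ} (hYC : ∀ ω, Y ω ≤ C) (hf : Integrable f μ)
    (hg : Integrable g μ) {c : ℝ}
    (hfg : ∀ᵐ ω ∂μ, μ[f|m'] ω ≤ c * μ[g|m'] ω) :
    ∫ ω, Y ω * f ω ∂μ ≤ c * ∫ ω, Y ω * g ω ∂μ := by
  have hbound : ∀ᵐ ω ∂μ, ‖Y ω‖ ≤ C :=
    ae_of_all _ fun ω => (Real.norm_of_nonneg (hY0 ω)).trans_le (hYC ω)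
  have hpull : ∀ h, Integrable h μ → (∫ ω, Y ω * h ω ∂μ = ∫ ω, Y ω * μ[h|m'] ω ∂μ) ∧
      Integrable (fun ω => Y ω * μ[h|m'] ω) μ := fun h hh => by
    have hYh : μ[Y * h|m'] =ᵐ[μ] Y * μ[h|m'] :=
      condExp_stronglyMeasurable_mul_of_bound hm hY hh C hbound
    exact ⟨(integral_condExp hm).symm.trans (integral_congr_ae hYh), integrable_condExp.congr hYh⟩
  calc ∫ ω, Y ω * f ω ∂μ = ∫ ω, Y ω * μ[f|m'] ω ∂μ := (hpull f hf).1
    _ ≤ ∫ ω, c * (Y ω * μ[g|m'] ω) ∂μ := by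
        refine integral_mono_ae (hpull f hf).2 ((hpull g hg).2.const_mul c) ?_
        filter_upwards [hfg] with ω hω
        rw [mul_left_comm]
        exact mul_le_mul_of_nonneg_left hω (hY0 ω)
    _ = c * ∫ ω, Y ω * g ω ∂μ := by rw [integral_const_mul, (hpull g hg).1]

theorem integral_ite_nonneg_le_of_condExp_le {m' mΩ : MeasurableSpace Ω} {μ : Measure Ω}
    [IsFiniteMeasure μ] (hm : m' ≤ mΩ) {X K Y : Ω → ℝ} (hX : Measurable X)
    (hK : Measurable K) (hY : StronglyMeasurable[m'] Y) (hY0 : ∀ ω, 0 ≤ Y ω)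
    (hY1 : ∀ ω, Y ω ≤ 1) {ε c : ℝ} (hc : 1 ≤ c)
    (hcond : ∀ᵐ ω ∂μ, μ[fun ω => if 0 < X ω ∧ K ω ≤ ε then (1 : ℝ) else 0|m'] ω
      ≤ c * μ[fun ω => if X ω < 0 then (1 : ℝ) else 0|m'] ω) :
    ∫ ω, (if 0 ≤ X ω then Y ω else 0) ∂μ
      ≤ c * ∫ ω, (if X ω ≤ 0 then Y ω else 0) ∂μ + μ.real {ω | ε < K ω} := by
  have hYm : Measurable Y := hY.measurable.mono hm le_rfl
  have hint : ∀ {h : Ω → ℝ}, Measurable h → (∀ ω, |h ω| ≤ 1) → Integrable h μ :=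
    fun hh hb => .of_bound hh.aestronglyMeasurable 1 (ae_of_all _ hb)
  have hite : ∀ {p : Ω → Prop} [DecidablePred p], MeasurableSet {ω | p ω} →
      Integrable (fun ω => if p ω then Y ω else 0) μ := fun hs =>
    hint (hYm.ite hs measurable_const) fun ω => by
      split_ifs
      exacts [abs_le.2 ⟨by linarith [hY0 ω], hY1 ω⟩, by simp]
  have hind : ∀ {p : Ω → Prop} [DecidablePred p], MeasurableSet {ω | p ω} →
      Integrable (fun ω => if p ω then (1 : ℝ) else 0) μ := fun hs =>
    hint (measurable_const.ite hs measurable_const) fun ω => by split_ifs <;> simp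
  have hpos : MeasurableSet {ω | 0 < X ω ∧ K ω ≤ ε} :=
    (measurableSet_lt measurable_const hX).inter (measurableSet_le hK measurable_const)
  have hneg : MeasurableSet {ω | X ω < 0} := measurableSet_lt hX measurable_const
  have hzero : MeasurableSet {ω | X ω = 0} := measurableSet_eq_fun hX measurable_const
  have hKε : MeasurableSet {ω | ε < K ω} := measurableSet_lt measurable_const hK
  have hcore : ∫ ω, (if 0 < X ω ∧ K ω ≤ ε then Y ω else 0) ∂μ
      ≤ c * ∫ ω, (if X ω < 0 then Y ω else 0) ∂μ := by
    simpa only [mul_ite, mul_one, mul_zero] using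
      integral_mul_le_of_condExp_le hm hY hY0 hY1 (hind hpos) (hind hneg) hcond
  calc ∫ ω, (if 0 ≤ X ω then Y ω else 0) ∂μ
      ≤ ∫ ω, ((if 0 < X ω ∧ K ω ≤ ε then Y ω else 0) + (if X ω = 0 then Y ω else 0)
          + (if ε < K ω then 1 else 0)) ∂μ := by
        refine integral_mono (hite (measurableSet_le measurable_const hX))
          (((hite hpos).add (hite hzero)).add (hind hKε)) fun ω => ?_
        have := hY1 ω
        grind
    _ = ∫ ω, (if 0 < X ω ∧ K ω ≤ ε then Y ω else 0) ∂μ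
          + ∫ ω, (if X ω = 0 then Y ω else 0) ∂μ + μ.real {ω | ε < K ω} := by
        rw [integral_add ?_ (hind hKε), integral_add (hite hpos) (hite hzero),
          ← integral_indicator_one hKε]
        exacts [rfl, (hite hpos).add (hite hzero)]
    _ ≤ c * ∫ ω, (if X ω < 0 then Y ω else 0) ∂μ
          + c * ∫ ω, (if X ω = 0 then Y ω else 0) ∂μ + μ.real {ω | ε < K ω} := by
        gcongr
        refine le_mul_of_one_le_left (integral_nonneg fun ω => ?_) hc
        split_ifs
        exacts [hY0 ω, le_rfl]
    _ = c * ∫ ω, (if X ω ≤ 0 then Y ω else 0) ∂μ + μ.real {ω | ε < K ω} := by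
        rw [← mul_add, ← integral_add (hite hneg) (hite hzero)]
        congr 3 with ω
        grind

theorem integral_mirrorWeight_le [MeasurableSpace Ω] {P : Measure Ω} [IsFiniteMeasure P]
    (α : ℝ) {G : Fin m → Ω → ℝ} (hG : ∀ k, Measurable (G k)) (i : Fin m) {K : Ω → ℝ}
    (hK : Measurable K) {ε : ℝ} (hε : 0 ≤ ε)
    (hcond : ∀ᵐ ω ∂P, P[fun ω => if 0 < G i ω ∧ K ω ≤ ε then (1 : ℝ) else 0|sigmaG G i] ω
      ≤ Real.exp ε * P[fun ω => if G i ω < 0 then (1 : ℝ) else 0|sigmaG G i] ω) :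
    ∫ ω, mirrorWeight α (fun k => G k ω) i ∂P
      ≤ Real.exp ε * ∫ ω, (if G i ω ≤ 0 then foldedMirrorWeight α (fun k => G k ω) i else 0) ∂P
        + P.real {ω | ε < K ω} := by
  simp_rw [mirrorWeight_eq_ite]
  exact integral_ite_nonneg_le_of_condExp_le (sigmaG_le hG i) (hG i) hK
    (stronglyMeasurable_foldedMirrorWeight α G i) (fun _ => mirrorWeight_nonneg _ _ _)
    (fun _ => mirrorWeight_le_one _ _ _) (Real.one_le_exp hε) hcond

theorem sum_integral_foldedMirrorWeight_le_one [MeasurableSpace Ω] {P : Measure Ω}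
    [IsProbabilityMeasure P] (α : ℝ) {G : Fin m → Ω → ℝ} (hG : ∀ k, Measurable (G k))
    (S : Finset (Fin m)) :
    ∑ i ∈ S, ∫ ω, (if G i ω ≤ 0 then foldedMirrorWeight α (fun k => G k ω) i else 0) ∂P ≤ 1 := by
  have hint : ∀ i ∈ S, Integrable
      (fun ω => if G i ω ≤ 0 then foldedMirrorWeight α (fun k => G k ω) i else 0) P := by
    intro i _
    have hY := ((stronglyMeasurable_foldedMirrorWeight α G i).measurable.mono
      (sigmaG_le hG i) le_rfl)
    refine .of_bound ((hY.ite (measurableSet_le (hG i) measurable_const)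
      measurable_const).aestronglyMeasurable) 1 (ae_of_all _ fun ω => ?_)
    split_ifs
    · exact (Real.norm_of_nonneg (mirrorWeight_nonneg _ _ _)).trans_le (mirrorWeight_le_one _ _ _)
    · simp
  rw [← integral_finsetSum S hint]
  calc _ ≤ ∫ _, (1 : ℝ) ∂P := integral_mono (integrable_finsetSum S hint) (integrable_const 1)
          fun ω => sum_foldedMirrorWeight_le_one α _ S
    _ = 1 := by simp

end

theorem fdr_bound_approximate_exchangeability_general
    {Ω : Type*} [MeasurableSpace Ω] (P : Measure Ω) [IsProbabilityMeasure P]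
    (m : ℕ) (H0 : Finset (Fin m)) (α : ℝ) (hα : α ∈ Set.Ioo (0 : ℝ) 1)
    (G : Fin m → Ω → ℝ) (hGmeas : ∀ i, Measurable (G i))
    (KL : Fin m → Ω → ℝ) (hKLmeas : ∀ i, Measurable (KL i))
    (hcond : ∀ i ∈ H0, ∀ ε : ℝ, 0 ≤ ε →
      ∀ᵐ ω ∂P,
        (P[(fun ω' => if 0 < G i ω' ∧ KL i ω' ≤ ε then (1 : ℝ) else 0) | sigmaG G i]) ω
          ≤ Real.exp ε *
            (P[(fun ω' => if G i ω' < 0 then (1 : ℝ) else 0) | sigmaG G i]) ω) :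
    (∫ ω, (((ebh α fun i => mirrorEValue α (fun k => G k ω) i) ∩ H0).card : ℝ) /
        max (((ebh α fun i => mirrorEValue α (fun k => G k ω) i).card : ℝ)) 1 ∂P)
      ≤ ⨅ ε : {ε : ℝ // 0 ≤ ε},
          α * (Real.exp ε.1 + ∑ i ∈ H0, (P {ω | ε.1 < KL i ω}).toReal) := by
  refine le_ciInf fun ⟨ε, hε⟩ => ?_
  have hW : ∀ i ∈ H0, Integrable (fun ω => mirrorWeight α (fun k => G k ω) i) P := fun i _ =>
    .of_bound ((measurable_mirrorWeight α i).comp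
      (measurable_pi_lambda _ hGmeas)).aestronglyMeasurable 1 (ae_of_all _ fun ω =>
        (Real.norm_of_nonneg (mirrorWeight_nonneg _ _ _)).trans_le (mirrorWeight_le_one _ _ _))
  calc _ ≤ ∫ ω, α * ∑ i ∈ H0, mirrorWeight α (fun k => G k ω) i ∂P :=
        integral_mono_of_nonneg (ae_of_all _ fun ω => by positivity)
          ((integrable_finsetSum H0 hW).const_mul α)
          (ae_of_all _ fun ω => fdp_ebh_mirrorEValue_le hα _ H0)
    _ = α * ∑ i ∈ H0, ∫ ω, mirrorWeight α (fun k => G k ω) i ∂P := by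
        rw [integral_const_mul, integral_finsetSum H0 hW]
    _ ≤ α * ∑ i ∈ H0, (Real.exp ε * ∫ ω, (if G i ω ≤ 0 then
          foldedMirrorWeight α (fun k => G k ω) i else 0) ∂P + P.real {ω | ε < KL i ω}) := by
        refine mul_le_mul_of_nonneg_left (Finset.sum_le_sum fun i hi => ?_) hα.1.le
        exact integral_mirrorWeight_le α hGmeas i (hKLmeas i) hε (hcond i hi ε hε)
    _ ≤ α * (Real.exp ε + ∑ i ∈ H0, (P {ω | ε < KL i ω}).toReal) := by
        rw [Finset.sum_add_distrib, ← Finset.mul_sum]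
        refine mul_le_mul_of_nonneg_left (add_le_add_left ?_ _) hα.1.le
        exact mul_le_of_le_one_right (Real.exp_pos ε).le
          (sum_integral_foldedMirrorWeight_le_one α hGmeas H0)

/-- **FDR bound under approximate pairwise exchangeability (Theorem 3, part (b)).**
Under the conditional-expectation hypothesis of Theorem 3(a), the e-BH procedure at
level `α` applied to the mirror e-values has
`FDR ≤ inf_{ε ≥ 0} α·[e^ε + Σ_{i∈H₀} ℙ(K̂L i > ε)]`. -/
theorem fdr_bound_approximate_exchangeability
    {Ω : Type*} [MeasurableSpace Ω] (P : Measure Ω) [IsProbabilityMeasure P]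
    (m : ℕ) (hm : 1 ≤ m) (H0 : Finset (Fin m)) (α : ℝ) (hα : α ∈ Set.Ioo (0 : ℝ) 1)
    (G : Fin m → Ω → ℝ) (hGmeas : ∀ i, Measurable (G i))
    (KL : Fin m → Ω → ℝ) (hKLmeas : ∀ i, Measurable (KL i))
    (hcond : ∀ i ∈ H0, ∀ ε : ℝ, 0 ≤ ε →
      ∀ᵐ ω ∂P,
        (P[(fun ω' => if 0 < G i ω' ∧ KL i ω' ≤ ε then (1 : ℝ) else 0) | sigmaG G i]) ω
          ≤ Real.exp ε *
            (P[(fun ω' => if G i ω' < 0 then (1 : ℝ) else 0) | sigmaG G i]) ω) :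
    (∫ ω, (((ebh α fun i => mirrorEValue α (fun k => G k ω) i) ∩ H0).card : ℝ) /
        max (((ebh α fun i => mirrorEValue α (fun k => G k ω) i).card : ℝ)) 1 ∂P)
      ≤ ⨅ ε : {ε : ℝ // 0 ≤ ε},
          α * (Real.exp ε.1 + ∑ i ∈ H0, (P {ω | ε.1 < KL i ω}).toReal) :=
  fdr_bound_approximate_exchangeability_general P m H0 α hα G hGmeas KL hKLmeas hcond
end
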